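/- arXiv:1609.01370 — 7 statements merged into one kernel-verified Lean document; each statement's English description precedes it below -/
import Mathlib

section
/- Let A ⊆ S_m, B ⊆ S_n, and let C be the set of π ∈ S_{m+n} such that the standardization of (π_1,...,π_m) lies in A and the standardization of (π_{m+1},...,π_{m+n}) lies in B. Then for every q > 0, (∑_{π∈A} q^{inv(π)}/[m]_q!) · (∑_{π∈B} q^{inv(π)}/[n]_q!) = ∑_{π∈C} q^{inv(π)}/[m+n]_q!. -/
open scoped Classical

/-- The q-integer `[k]_q = 1 + q + ... + q^(k-1)`. -/
noncomputable def qint (q : ℝ) (k : ℕ) : ℝ := ∑ i ∈ Finset.range k, q ^ i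

/-- The q-factorial `[n]_q! = [1]_q [2]_q ⋯ [n]_q`. -/
noncomputable def qfact (q : ℝ) (n : ℕ) : ℝ := ∏ i ∈ Finset.range n, qint q (i + 1)

/-- The number of inversions of a permutation of `{0, ..., n-1}`. -/
def inversions {n : ℕ} (π : Equiv.Perm (Fin n)) : ℕ :=
  (Finset.univ.filter (fun p : Fin n × Fin n => p.1 < p.2 ∧ π p.2 < π p.1)).card

/-- The pattern `σ ∈ S_m` occurs consecutively in `π ∈ S_n` starting at (0-indexed) position `j`:
the window `π_j, ..., π_{j+m-1}` is order-isomorphic to `σ`. -/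
def occursAt {m n : ℕ} (σ : Equiv.Perm (Fin m)) (π : Equiv.Perm (Fin n)) (j : ℕ) : Prop :=
  ∃ h : j + m ≤ n, ∀ a b : Fin m,
    σ a < σ b ↔
      π ⟨j + (a : ℕ), lt_of_lt_of_le (Nat.add_lt_add_left a.isLt j) h⟩ <
      π ⟨j + (b : ℕ), lt_of_lt_of_le (Nat.add_lt_add_left b.isLt j) h⟩

/-- `π` avoids `σ` as a consecutive pattern. -/
def avoids {m n : ℕ} (σ : Equiv.Perm (Fin m)) (π : Equiv.Perm (Fin n)) : Prop :=
  ∀ j : ℕ, ¬ occursAt σ π j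

/-- `P_n(σ, q)`: the probability that a Mallows(q) random permutation of length `n`
avoids `σ` as a consecutive pattern. -/
noncomputable def Pn (m : ℕ) (σ : Equiv.Perm (Fin m)) (q : ℝ) (n : ℕ) : ℝ :=
  (∑ π ∈ Finset.univ.filter (fun π : Equiv.Perm (Fin n) => avoids σ π),
    q ^ inversions π) / qfact q n

/-- The standardization of the first `m` entries of `π ∈ S_{m+n}` is `σ`. -/
def firstIs {m n : ℕ} (π : Equiv.Perm (Fin (m + n))) (σ : Equiv.Perm (Fin m)) : Prop :=
  ∀ a b : Fin m, σ a < σ b ↔ π (Fin.castAdd n a) < π (Fin.castAdd n b)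

/-- The standardization of the last `n` entries of `π ∈ S_{m+n}` is `τ`. -/
def secondIs {m n : ℕ} (π : Equiv.Perm (Fin (m + n))) (τ : Equiv.Perm (Fin n)) : Prop :=
  ∀ a b : Fin n, τ a < τ b ↔ π (Fin.natAdd m a) < π (Fin.natAdd m b)

/-!
Splitting `π ∈ S_{m+n}` into the set `S` of its first `m` values and the standardizations `σ`, `τ`
of its two blocks is a bijection onto the triples `(S, σ, τ)` with `#S = m`, and under it
`inv π = inv σ + inv τ + crossings S`, where `crossings S` counts the pairs `y < x` with `x ∈ S`,
`y ∉ S`. Hence `∑_{π ∈ C} q ^ inv π = K · ∑_{σ ∈ A} q ^ inv σ · ∑_{τ ∈ B} q ^ inv τ` with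
`K = ∑_S q ^ crossings S`.
For `n = 1` this gives `∑_π q ^ inv π = [k]_q!` by induction on `k`; with `A = S_m`, `B = S_n`
it then gives `K · [m]_q! · [n]_q! = [m+n]_q!`, which turns the factorization into the lemma.
-/

open Finset Equiv

section Standardization

variable {α : Type*} [LinearOrder α] {m : ℕ}

theorem perm_eq_of_forall_lt_iff_lt {σ τ : Perm (Fin m)}
    (h : ∀ a b, σ a < σ b ↔ τ a < τ b) : σ = τ := by
  have hmono : StrictMono (τ ∘ σ.symm) := fun x y hxy => by
    simpa [← h] using hxy
  ext a
  simpa using congrArg Fin.val (congrFun hmono.eq_id (σ a)).symm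

theorem sum_eq_sum_orderEmbOfFin {β : Type*} [AddCommMonoid β] {k : ℕ} (S : Finset α)
    (h : #S = k) (g : α → β) : ∑ x ∈ S, g x = ∑ i, g (S.orderEmbOfFin h i) := by
  simpa using sum_map univ (S.orderEmbOfFin h).toEmbedding g

/-- The standardization of an injective `g : Fin m → α` with values in a finset `U` of size `m`:
`a` is sent to the rank of `g a` in `U`. -/
noncomputable def rankPerm (U : Finset α) (hU : #U = m) (g : Fin m → α) (hgU : ∀ a, g a ∈ U)
    (hg : Function.Injective g) : Perm (Fin m) :=
  Equiv.ofBijective (fun a => (U.orderIsoOfFin hU).symm ⟨g a, hgU a⟩)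
    (Finite.injective_iff_bijective.mp fun a b hab => hg (by simpa using hab))

variable {U : Finset α} {hU : #U = m} {g : Fin m → α} {hgU : ∀ a, g a ∈ U}
  {hg : Function.Injective g}

@[simp]
theorem orderEmbOfFin_rankPerm (a : Fin m) :
    U.orderEmbOfFin hU (rankPerm U hU g hgU hg a) = g a := by
  simp [rankPerm, ← Finset.coe_orderIsoOfFin_apply]

theorem rankPerm_eq_iff {σ : Perm (Fin m)} :
    rankPerm U hU g hgU hg = σ ↔ ∀ a b, σ a < σ b ↔ g a < g b := by
  have hlt : ∀ a b, rankPerm U hU g hgU hg a < rankPerm U hU g hgU hg b ↔ g a < g b := by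
    intro a b
    rw [← (U.orderEmbOfFin hU).lt_iff_lt, orderEmbOfFin_rankPerm, orderEmbOfFin_rankPerm]
  constructor
  · rintro rfl
    exact hlt
  · exact fun h => perm_eq_of_forall_lt_iff_lt fun a b => (hlt a b).trans (h a b).symm

end Standardization

section Splitting

variable {m n : ℕ}

theorem card_compl_of_card_eq {S : Finset (Fin (m + n))} (h : #S = m) : #Sᶜ = n := by
  rw [card_compl, h, Fintype.card_fin]
  omega

/-- The permutation of `Fin (m + n)` that lists the values `S` in the pattern `σ` and then the
values `Sᶜ` in the pattern `τ`. -/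
noncomputable def mergePerm (S : {S : Finset (Fin (m + n)) // #S = m}) (σ : Perm (Fin m))
    (τ : Perm (Fin n)) : Perm (Fin (m + n)) :=
  finSumFinEquiv.symm.trans <| (sumCongr σ τ).trans <|
    (sumCongr (S.1.orderIsoOfFin S.2).toEquiv
      ((S.1ᶜ.orderIsoOfFin (card_compl_of_card_eq S.2)).toEquiv.trans
        (subtypeEquivRight fun _ => mem_compl))).trans <|
    sumCompl (· ∈ S.1)

variable (S : {S : Finset (Fin (m + n)) // #S = m}) (σ : Perm (Fin m)) (τ : Perm (Fin n))

@[simp]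
theorem mergePerm_castAdd (a : Fin m) :
    mergePerm S σ τ (Fin.castAdd n a) = S.1.orderEmbOfFin S.2 (σ a) := by
  simp [mergePerm, ← Finset.coe_orderIsoOfFin_apply]

@[simp]
theorem mergePerm_natAdd (b : Fin n) :
    mergePerm S σ τ (Fin.natAdd m b) =
      S.1ᶜ.orderEmbOfFin (card_compl_of_card_eq S.2) (τ b) := by
  simp [mergePerm, ← Finset.coe_orderIsoOfFin_apply]

def firstValues (π : Perm (Fin (m + n))) : {S : Finset (Fin (m + n)) // #S = m} :=
  ⟨univ.map ((Fin.castAddEmb n).trans π.toEmbedding), by simp⟩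

theorem apply_castAdd_mem_firstValues (π : Perm (Fin (m + n))) (a : Fin m) :
    π (Fin.castAdd n a) ∈ (firstValues π).1 :=
  mem_map_of_mem _ (mem_univ a)

theorem apply_natAdd_mem_compl_firstValues (π : Perm (Fin (m + n))) (b : Fin n) :
    π (Fin.natAdd m b) ∈ (firstValues π).1ᶜ := by
  simp only [firstValues, mem_compl, mem_map, mem_univ, true_and, not_exists,
    Function.Embedding.trans_apply, Fin.coe_castAddEmb, toEmbedding_apply,
    EmbeddingLike.apply_eq_iff_eq, Fin.ext_iff, Fin.val_castAdd, Fin.val_natAdd]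
  omega

theorem firstValues_mergePerm : firstValues (mergePerm S σ τ) = S := by
  ext x
  simp only [firstValues, mem_map, mem_univ, true_and, Function.Embedding.trans_apply,
    Fin.castAddEmb_apply, toEmbedding_apply, mergePerm_castAdd]
  exact σ.surjective.exists.symm.trans (Set.ext_iff.mp (S.1.range_orderEmbOfFin S.2) x)

noncomputable def permSplitEquiv :
    Perm (Fin (m + n)) ≃ {S : Finset (Fin (m + n)) // #S = m} × Perm (Fin m) × Perm (Fin n) where
  toFun π := (firstValues π,
    rankPerm _ (firstValues π).2 _ (apply_castAdd_mem_firstValues π)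
      (π.injective.comp (Fin.castAdd_injective m n)),
    rankPerm _ (card_compl_of_card_eq (firstValues π).2) _ (apply_natAdd_mem_compl_firstValues π)
      (π.injective.comp (Fin.natAdd_injective n m)))
  invFun x := mergePerm x.1 x.2.1 x.2.2
  left_inv π := by
    ext x : 1
    induction x using Fin.addCases <;> simp
  right_inv x := by
    obtain ⟨S, σ, τ⟩ := x
    refine Prod.ext (firstValues_mergePerm S σ τ) (Prod.ext ?_ ?_)
    · simp [rankPerm_eq_iff]
    · simp [rankPerm_eq_iff]

theorem firstIs_iff {π : Perm (Fin (m + n))} {σ : Perm (Fin m)} :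
    firstIs π σ ↔ (permSplitEquiv π).2.1 = σ :=
  (rankPerm_eq_iff (hg := π.injective.comp (Fin.castAdd_injective m n))).symm

theorem secondIs_iff {π : Perm (Fin (m + n))} {τ : Perm (Fin n)} :
    secondIs π τ ↔ (permSplitEquiv π).2.2 = τ :=
  (rankPerm_eq_iff (hg := π.injective.comp (Fin.natAdd_injective n m))).symm

end Splitting

section Inversions

variable {α : Type*} [LinearOrder α]

def invCount {k : ℕ} (f : Fin k → α) : ℕ :=
  #{p : Fin k × Fin k | p.1 < p.2 ∧ f p.2 < f p.1}

theorem inversions_eq_invCount {k : ℕ} (π : Perm (Fin k)) : inversions π = invCount π := rfl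

theorem invCount_comp_of_strictMono {β : Type*} [LinearOrder β] {k : ℕ} {g : α → β}
    (hg : StrictMono g) (f : Fin k → α) : invCount (g ∘ f) = invCount f := by
  simp only [invCount, Function.comp_apply, hg.lt_iff_lt]

theorem invCount_eq_sum {k : ℕ} (f : Fin k → α) :
    invCount f = ∑ i, ∑ j, if i < j ∧ f j < f i then 1 else 0 := by
  rw [invCount, card_filter, Fintype.sum_prod_type]

theorem invCount_add {m n : ℕ} (f : Fin (m + n) → α) :
    invCount f = invCount (f ∘ Fin.castAdd n) + invCount (f ∘ Fin.natAdd m) +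
      ∑ a, ∑ b, if f (Fin.natAdd m b) < f (Fin.castAdd n a) then 1 else 0 := by
  have hlt (a : Fin m) (b : Fin n) : Fin.castAdd n a < Fin.natAdd m b := by
    simp only [Fin.lt_def, Fin.val_castAdd, Fin.val_natAdd]
    omega
  simp only [invCount_eq_sum, Fin.sum_univ_add, Function.comp_apply, hlt, (hlt _ _).not_gt,
    (Fin.strictMono_castAdd n).lt_iff_lt, Fin.natAdd_lt_natAdd_iff, true_and, false_and,
    if_false, sum_const_zero, add_zero, sum_add_distrib]
  ring

def crossings [Fintype α] (S : Finset α) : ℕ :=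
  ∑ x ∈ S, ∑ y ∈ Sᶜ, if y < x then 1 else 0

end Inversions

theorem inversions_mergePerm {m n : ℕ} (S : {S : Finset (Fin (m + n)) // #S = m})
    (σ : Perm (Fin m)) (τ : Perm (Fin n)) :
    inversions (mergePerm S σ τ) = inversions σ + inversions τ + crossings S.1 := by
  have hfirst : mergePerm S σ τ ∘ Fin.castAdd n = S.1.orderEmbOfFin S.2 ∘ σ :=
    funext (mergePerm_castAdd S σ τ)
  have hsecond : mergePerm S σ τ ∘ Fin.natAdd m =
      S.1ᶜ.orderEmbOfFin (card_compl_of_card_eq S.2) ∘ τ :=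
    funext (mergePerm_natAdd S σ τ)
  rw [inversions_eq_invCount, invCount_add, hfirst, hsecond,
    invCount_comp_of_strictMono (OrderEmbedding.strictMono _),
    invCount_comp_of_strictMono (OrderEmbedding.strictMono _), ← inversions_eq_invCount,
    ← inversions_eq_invCount, crossings, sum_eq_sum_orderEmbOfFin S.1 S.2]
  congr 1
  refine Fintype.sum_equiv σ _ _ fun a => ?_
  rw [sum_eq_sum_orderEmbOfFin _ (card_compl_of_card_eq S.2)]
  exact Fintype.sum_equiv τ _ _ fun b => by simp

theorem inversions_eq_permSplitEquiv {m n : ℕ} (π : Perm (Fin (m + n))) :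
    inversions π = inversions (permSplitEquiv π).2.1 + inversions (permSplitEquiv π).2.2 +
      crossings (permSplitEquiv π).1.1 := by
  conv_lhs => rw [← permSplitEquiv.symm_apply_apply π]
  exact inversions_mergePerm _ _ _

theorem sum_pow_inversions_filter_firstIs_secondIs {R : Type*} [CommSemiring R] {m n : ℕ} (q : R)
    (A : Finset (Perm (Fin m))) (B : Finset (Perm (Fin n))) :
    ∑ π ∈ univ.filter (fun π : Perm (Fin (m + n)) =>
        (∃ σ ∈ A, firstIs π σ) ∧ (∃ τ ∈ B, secondIs π τ)), q ^ inversions π =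
      (∑ S : {S : Finset (Fin (m + n)) // #S = m}, q ^ crossings S.1) *
        ((∑ σ ∈ A, q ^ inversions σ) * ∑ τ ∈ B, q ^ inversions τ) := by
  calc _ = ∑ x ∈ (univ : Finset {S : Finset (Fin (m + n)) // #S = m}) ×ˢ A ×ˢ B,
        q ^ crossings x.1.1 * (q ^ inversions x.2.1 * q ^ inversions x.2.2) := by
        refine sum_equiv permSplitEquiv (fun π => ?_) (fun π _ => ?_)
        · simp [firstIs_iff, secondIs_iff]
        · rw [inversions_eq_permSplitEquiv π, pow_add, pow_add]
          ring
    _ = _ := by simp_rw [sum_product, sum_mul_sum, mul_sum]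

theorem sum_pow_inversions_eq_mul {R : Type*} [CommSemiring R] {m n : ℕ} (q : R) :
    ∑ π : Perm (Fin (m + n)), q ^ inversions π =
      (∑ S : {S : Finset (Fin (m + n)) // #S = m}, q ^ crossings S.1) *
        ((∑ σ : Perm (Fin m), q ^ inversions σ) * ∑ τ : Perm (Fin n), q ^ inversions τ) := by
  rw [← sum_pow_inversions_filter_firstIs_secondIs q univ univ,
    filter_true_of_mem fun π _ => ⟨⟨_, mem_univ _, firstIs_iff.2 rfl⟩,
      ⟨_, mem_univ _, secondIs_iff.2 rfl⟩⟩]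

theorem crossings_compl_singleton {k : ℕ} (p : Fin (k + 1)) :
    crossings ({p}ᶜ : Finset (Fin (k + 1))) = k - p := by
  have hIoi : ({p}ᶜ : Finset (Fin (k + 1))).filter (p < ·) = Ioi p := by
    ext x
    simpa using fun h : p < x => h.ne'
  rw [crossings, compl_compl]
  simp only [sum_singleton]
  rw [sum_boole, hIoi, Nat.cast_id, Fin.card_Ioi]
  omega

theorem sum_pow_crossings_fin_succ {R : Type*} [CommSemiring R] (q : R) (k : ℕ) :
    ∑ S : {S : Finset (Fin (k + 1)) // #S = k}, q ^ crossings S.1 = ∑ i ∈ range (k + 1), q ^ i := by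
  have hbij : Function.Bijective fun p : Fin (k + 1) =>
      (⟨{p}ᶜ, by simp [card_compl]⟩ : {S : Finset (Fin (k + 1)) // #S = k}) := by
    refine ⟨fun p p' h => by simpa using congrArg Subtype.val h, fun S => ?_⟩
    obtain ⟨p, hp⟩ := card_eq_one.mp (card_compl_of_card_eq (n := 1) S.2)
    exact ⟨p, Subtype.ext (by simp [← hp])⟩
  rw [← Fintype.sum_bijective _ hbij (fun p => q ^ (k - (p : ℕ))) _
      fun p => by rw [crossings_compl_singleton],
    Fin.sum_univ_eq_sum_range (fun i => q ^ (k - i))]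
  simpa using sum_range_reflect (q ^ ·) (k + 1)

theorem sum_pow_inversions_eq_qfact (q : ℝ) (k : ℕ) :
    ∑ π : Perm (Fin k), q ^ inversions π = qfact q k := by
  induction k with
  | zero => simp [inversions, qfact]
  | succ k ih =>
    have hone : ∑ τ : Perm (Fin 1), q ^ inversions τ = 1 := by
      simp only [univ_unique, sum_singleton, inversions]
      rw [filter_false_of_mem fun p _ h => h.1.asymm h.2, card_empty, pow_zero]
    rw [sum_pow_inversions_eq_mul (m := k) (n := 1), sum_pow_crossings_fin_succ, ih, hone,
      qfact, qfact, prod_range_succ, qint]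
    ring

theorem qfact_pos {q : ℝ} (hq : 0 ≤ q) (k : ℕ) : 0 < qfact q k :=
  prod_pos fun i _ => sum_pos' (fun j _ => pow_nonneg hq j) ⟨0, by simp⟩

/-- product lemma for Mallows weights. -/
theorem mallows_product_lemma (m n : ℕ) (q : ℝ) (hq : 0 < q)
    (A : Finset (Equiv.Perm (Fin m))) (B : Finset (Equiv.Perm (Fin n))) :
    (∑ π ∈ A, q ^ inversions π / qfact q m) * (∑ π ∈ B, q ^ inversions π / qfact q n)
      = ∑ π ∈ Finset.univ.filter (fun π : Equiv.Perm (Fin (m + n)) =>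
            (∃ σ ∈ A, firstIs π σ) ∧ (∃ τ ∈ B, secondIs π τ)),
          q ^ inversions π / qfact q (m + n) := by
  have hK := sum_pow_inversions_eq_mul q (m := m) (n := n)
  simp only [sum_pow_inversions_eq_qfact] at hK
  have hK0 : ∑ S : {S : Finset (Fin (m + n)) // #S = m}, q ^ crossings S.1 ≠ 0 :=
    left_ne_zero_of_mul (hK ▸ (qfact_pos hq.le (m + n)).ne')
  rw [← sum_div, ← sum_div, ← sum_div, sum_pow_inversions_filter_firstIs_secondIs, hK,
    mul_div_mul_left _ _ hK0, div_mul_div_comm]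
end

section
/- Given distinct permutations σ ∈ S_m and τ ∈ S_n, the number of permutations π ∈ S_{m+n} such that the standardization of (π_1,...,π_m) equals σ and the standardization of (π_{m+1},...,π_{m+n}) equals τ is exactly the binomial coefficient C(m+n, m), and for each such π, inv(π) = inv(σ) + inv(τ) + inv(w), where w is the binary word of length m+n with w_i = 0 if value i appears among the first m entries of π and w_i = 1 otherwise. -/
open scoped Classical

set_option maxRecDepth 10000

section aux
variable {m n : ℕ} (σ : Equiv.Perm (Fin m)) (τ : Equiv.Perm (Fin n))

lemma aux_card_compl (S : Finset (Fin (m + n))) (hS : S.card = m) : Sᶜ.card = n := by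
  rw [Finset.card_compl, hS, Fintype.card_fin]; omega

noncomputable def mkPerm (S : Finset (Fin (m + n))) (hS : S.card = m) :
    Equiv.Perm (Fin (m + n)) :=
  finSumFinEquiv.symm.trans <|
    (Equiv.sumCongr (σ.trans (S.orderIsoOfFin hS).toEquiv)
      (τ.trans ((Sᶜ.orderIsoOfFin (aux_card_compl S hS)).toEquiv.trans
        (Equiv.subtypeEquivRight fun x => Finset.mem_compl)))).trans
      (Equiv.sumCompl (· ∈ S))

lemma mkPerm_castAdd (S : Finset (Fin (m + n))) (hS : S.card = m) (a : Fin m) :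
    mkPerm σ τ S hS (Fin.castAdd n a) = (S.orderIsoOfFin hS (σ a) : Fin (m + n)) := by
  simp [mkPerm]

lemma mkPerm_natAdd (S : Finset (Fin (m + n))) (hS : S.card = m) (b : Fin n) :
    mkPerm σ τ S hS (Fin.natAdd m b)
      = (Sᶜ.orderIsoOfFin (aux_card_compl S hS) (τ b) : Fin (m + n)) := by
  simp [mkPerm]

end aux

section aux2
variable {m n : ℕ} (σ : Equiv.Perm (Fin m)) (τ : Equiv.Perm (Fin n))

lemma mkPerm_firstIs (S : Finset (Fin (m + n))) (hS : S.card = m) :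
    firstIs (mkPerm σ τ S hS) σ := by
  intro a b
  simp only [mkPerm_castAdd, Subtype.coe_lt_coe, OrderIso.lt_iff_lt]

lemma mkPerm_secondIs (S : Finset (Fin (m + n))) (hS : S.card = m) :
    secondIs (mkPerm σ τ S hS) τ := by
  intro a b
  simp only [mkPerm_natAdd, Subtype.coe_lt_coe, OrderIso.lt_iff_lt]

lemma mkPerm_image (S : Finset (Fin (m + n))) (hS : S.card = m) :
    Finset.image (fun a : Fin m => mkPerm σ τ S hS (Fin.castAdd n a)) Finset.univ = S := by
  apply Finset.eq_of_subset_of_card_le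
  · intro x hx
    simp only [Finset.mem_image] at hx
    obtain ⟨a, -, rfl⟩ := hx
    rw [mkPerm_castAdd]
    exact (S.orderIsoOfFin hS (σ a)).2
  · rw [hS, Finset.card_image_of_injective _
      (fun a b hab => Fin.castAdd_injective m n ((mkPerm σ τ S hS).injective hab))]
    simp

lemma image_natAdd_eq_compl (π : Equiv.Perm (Fin (m + n))) :
    Finset.image (fun b : Fin n => π (Fin.natAdd m b)) Finset.univ
      = (Finset.image (fun a : Fin m => π (Fin.castAdd n a)) Finset.univ)ᶜ := by
  ext x
  simp only [Finset.mem_image, Finset.mem_compl, Finset.mem_univ, true_and]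
  constructor
  · rintro ⟨b, rfl⟩ ⟨a, ha⟩
    have := π.injective ha
    have h1 : (Fin.castAdd n a : ℕ) = (Fin.natAdd m b : ℕ) := by rw [this]
    simp at h1; omega
  · intro hx
    obtain ⟨y, rfl⟩ := π.surjective x
    induction y using Fin.addCases with
    | left a => exact absurd ⟨a, rfl⟩ hx
    | right b => exact ⟨b, rfl⟩

lemma perm_unique (π π' : Equiv.Perm (Fin (m + n)))
    (h1 : firstIs π σ) (h2 : secondIs π τ) (h1' : firstIs π' σ) (h2' : secondIs π' τ)
    (him : Finset.image (fun a : Fin m => π (Fin.castAdd n a)) Finset.univ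
      = Finset.image (fun a : Fin m => π' (Fin.castAdd n a)) Finset.univ) : π = π' := by
  have hf : ∀ (ρ : Equiv.Perm (Fin (m+n))), firstIs ρ σ →
      StrictMono (fun a : Fin m => ρ (Fin.castAdd n (σ.symm a))) := by
    intro ρ hρ a b hab
    exact (hρ _ _).1 (by simpa using hab)
  have hg : ∀ (ρ : Equiv.Perm (Fin (m+n))), secondIs ρ τ →
      StrictMono (fun b : Fin n => ρ (Fin.natAdd m (τ.symm b))) := by
    intro ρ hρ a b hab
    exact (hρ _ _).1 (by simpa using hab)
  have hrange : ∀ (ρ : Equiv.Perm (Fin (m+n))),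
      Set.range (fun a : Fin m => ρ (Fin.castAdd n (σ.symm a)))
        = ↑(Finset.image (fun a : Fin m => ρ (Fin.castAdd n a)) Finset.univ) := by
    intro ρ; ext x
    simp only [Set.mem_range, Finset.coe_image, Set.mem_image, Finset.coe_univ,
      Set.mem_univ, true_and]
    exact ⟨fun ⟨a, ha⟩ => ⟨σ.symm a, ha⟩, fun ⟨a, ha⟩ => ⟨σ a, by simpa using ha⟩⟩
  have hrange2 : ∀ (ρ : Equiv.Perm (Fin (m+n))),
      Set.range (fun b : Fin n => ρ (Fin.natAdd m (τ.symm b)))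
        = ↑((Finset.image (fun a : Fin m => ρ (Fin.castAdd n a)) Finset.univ)ᶜ) := by
    intro ρ
    rw [← image_natAdd_eq_compl]
    ext x
    simp only [Set.mem_range, Finset.coe_image, Set.mem_image, Finset.coe_univ,
      Set.mem_univ, true_and]
    exact ⟨fun ⟨a, ha⟩ => ⟨τ.symm a, ha⟩, fun ⟨a, ha⟩ => ⟨τ a, by simpa using ha⟩⟩
  have e1 : (fun a : Fin m => π (Fin.castAdd n (σ.symm a)))
      = (fun a : Fin m => π' (Fin.castAdd n (σ.symm a))) :=
    by
      have inst : WellFoundedLT (Fin m) := inferInstance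
      exact Set.range_injOn_strictMono (hf π h1) (hf π' h1') (by rw [hrange, hrange, him])
  have e2 : (fun b : Fin n => π (Fin.natAdd m (τ.symm b)))
      = (fun b : Fin n => π' (Fin.natAdd m (τ.symm b))) :=
    by
      have inst : WellFoundedLT (Fin n) := inferInstance
      exact Set.range_injOn_strictMono (hg π h2) (hg π' h2') (by rw [hrange2, hrange2, him])
  ext x
  induction x using Fin.addCases with
  | left a =>
    have := congrFun e1 (σ a)
    simp only [Equiv.symm_apply_apply] at this
    exact congrArg _ this
  | right b =>
    have := congrFun e2 (τ b)
    simp only [Equiv.symm_apply_apply] at this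
    exact congrArg _ this

end aux2

lemma inv_split {m n : ℕ} (σ : Equiv.Perm (Fin m)) (τ : Equiv.Perm (Fin n))
    (π : Equiv.Perm (Fin (m + n))) (h1 : firstIs π σ) (h2 : secondIs π τ) :
    inversions π = inversions σ + inversions τ +
      (Finset.univ.filter (fun p : Fin (m + n) × Fin (m + n) =>
        p.1 < p.2 ∧ m ≤ ((π.symm p.1 : ℕ)) ∧ ((π.symm p.2 : ℕ)) < m)).card := by
  set A := Finset.univ.filter
    (fun p : Fin (m + n) × Fin (m + n) => p.1 < p.2 ∧ π p.2 < π p.1) with hA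
  have hsplit1 : A.card = (A.filter (fun p => (p.1 : ℕ) < m)).card
      + (A.filter (fun p => ¬ (p.1 : ℕ) < m)).card :=
    (Finset.card_filter_add_card_filter_not _).symm
  have hsplit2 : (A.filter (fun p => (p.1 : ℕ) < m)).card
      = ((A.filter (fun p => (p.1 : ℕ) < m)).filter (fun p => (p.2 : ℕ) < m)).card
      + ((A.filter (fun p => (p.1 : ℕ) < m)).filter (fun p => ¬ (p.2 : ℕ) < m)).card :=
    (Finset.card_filter_add_card_filter_not _).symm
  have hFF : inversions σ
      = ((A.filter (fun p => (p.1 : ℕ) < m)).filter (fun p => (p.2 : ℕ) < m)).card := by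
    apply Finset.card_bij
      (fun (q : Fin m × Fin m) _ => ((Fin.castAdd n q.1, Fin.castAdd n q.2) :
        Fin (m + n) × Fin (m + n)))
    · intro q hq
      simp only [Finset.mem_filter, Finset.mem_univ, true_and, hA] at hq ⊢
      obtain ⟨hlt, hinv⟩ := hq
      refine ⟨⟨⟨?_, (h1 q.2 q.1).1 hinv⟩, ?_⟩, ?_⟩
      · rw [Fin.lt_def] at hlt ⊢; simpa using hlt
      · exact q.1.isLt
      · exact q.2.isLt
    · intro q hq q' hq' h
      have h1' := congrArg Prod.fst h
      have h2' := congrArg Prod.snd h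
      simp only at h1' h2'
      exact Prod.ext (Fin.castAdd_injective m n h1') (Fin.castAdd_injective m n h2')
    · intro p hp
      simp only [Finset.mem_filter, Finset.mem_univ, true_and, hA] at hp
      obtain ⟨⟨⟨hlt, hinv⟩, hp1⟩, hp2⟩ := hp
      refine ⟨(⟨(p.1 : ℕ), hp1⟩, ⟨(p.2 : ℕ), hp2⟩), ?_, ?_⟩
      · have e1 : Fin.castAdd n (⟨(p.1 : ℕ), hp1⟩ : Fin m) = p.1 := Fin.ext rfl
        have e2 : Fin.castAdd n (⟨(p.2 : ℕ), hp2⟩ : Fin m) = p.2 := Fin.ext rfl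
        simp only [Finset.mem_filter, Finset.mem_univ, true_and]
        refine ⟨?_, (h1 _ _).2 (by rw [e1, e2]; exact hinv)⟩
        rw [Fin.lt_def] at hlt ⊢; simpa using hlt
      · exact Prod.ext (Fin.ext rfl) (Fin.ext rfl)
  have hSS : inversions τ = (A.filter (fun p => ¬ (p.1 : ℕ) < m)).card := by
    apply Finset.card_bij
      (fun (q : Fin n × Fin n) _ => ((Fin.natAdd m q.1, Fin.natAdd m q.2) :
        Fin (m + n) × Fin (m + n)))
    · intro q hq
      simp only [Finset.mem_filter, Finset.mem_univ, true_and, hA] at hq ⊢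
      obtain ⟨hlt, hinv⟩ := hq
      refine ⟨⟨?_, (h2 q.2 q.1).1 hinv⟩, by simp⟩
      rw [Fin.lt_def] at hlt ⊢; simp; omega
    · intro q hq q' hq' h
      have h1' := congrArg Prod.fst h
      have h2' := congrArg Prod.snd h
      simp only at h1' h2'
      exact Prod.ext ((Fin.natAddEmb m).injective h1') ((Fin.natAddEmb m).injective h2')
    · intro p hp
      simp only [Finset.mem_filter, Finset.mem_univ, true_and, hA, not_lt] at hp
      obtain ⟨⟨hlt, hinv⟩, hp1⟩ := hp
      have hp2 : m ≤ (p.2 : ℕ) := le_trans hp1 (le_of_lt hlt)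
      have hb1 : (p.1 : ℕ) - m < n := by omega
      have hb2 : (p.2 : ℕ) - m < n := by omega
      refine ⟨(⟨(p.1 : ℕ) - m, hb1⟩, ⟨(p.2 : ℕ) - m, hb2⟩), ?_, ?_⟩
      · have e1 : Fin.natAdd m (⟨(p.1 : ℕ) - m, hb1⟩ : Fin n) = p.1 := Fin.ext (by simp; omega)
        have e2 : Fin.natAdd m (⟨(p.2 : ℕ) - m, hb2⟩ : Fin n) = p.2 := Fin.ext (by simp; omega)
        simp only [Finset.mem_filter, Finset.mem_univ, true_and]
        refine ⟨?_, (h2 _ _).2 (by rw [e1, e2]; exact hinv)⟩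
        have h' := Fin.lt_def.1 hlt
        rw [Fin.lt_def]; simp; omega
      · refine Prod.ext (Fin.ext ?_) (Fin.ext ?_) <;> simp <;> omega
  have hFS : (Finset.univ.filter (fun p : Fin (m + n) × Fin (m + n) =>
        p.1 < p.2 ∧ m ≤ ((π.symm p.1 : ℕ)) ∧ ((π.symm p.2 : ℕ)) < m)).card
      = ((A.filter (fun p => (p.1 : ℕ) < m)).filter (fun p => ¬ (p.2 : ℕ) < m)).card := by
    apply Finset.card_bij
      (fun (q : Fin (m + n) × Fin (m + n)) _ => (π.symm q.2, π.symm q.1))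
    · intro q hq
      simp only [Finset.mem_filter, Finset.mem_univ, true_and, hA, not_lt,
        Equiv.apply_symm_apply] at hq ⊢
      obtain ⟨hlt, hq1, hq2⟩ := hq
      exact ⟨⟨⟨by rw [Fin.lt_def]; omega, hlt⟩, hq2⟩, hq1⟩
    · intro q hq q' hq' h
      have h1' := congrArg Prod.fst h
      have h2' := congrArg Prod.snd h
      simp only at h1' h2'
      exact Prod.ext (π.symm.injective h2') (π.symm.injective h1')
    · intro p hp
      simp only [Finset.mem_filter, Finset.mem_univ, true_and, hA, not_lt] at hp
      obtain ⟨⟨⟨hlt, hinv⟩, hp1⟩, hp2⟩ := hp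
      refine ⟨(π p.2, π p.1), ?_, ?_⟩
      · simp only [Finset.mem_filter, Finset.mem_univ, true_and, Equiv.symm_apply_apply]
        exact ⟨hinv, hp2, hp1⟩
      · simp [Prod.ext_iff]
  show A.card = _
  rw [hsplit1, hsplit2, hFF, hSS, hFS]
  omega

/-- there are exactly `C(m+n, m)` permutations `π ∈ S_{m+n}` whose first `m`
entries standardize to `σ` and whose last `n` entries standardize to `τ`; and for each such
`π`, `inv(π) = inv(σ) + inv(τ) + inv(w)`, where the binary word `w` has `w_i = 0` iff the
value `i` appears among the first `m` entries of `π` (i.e. `π⁻¹(i) < m`), and `inv(w)`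
counts pairs `i < j` with `w_i = 1`, `w_j = 0`. -/
theorem card_concatenations_and_inversions (m n : ℕ)
    (σ : Equiv.Perm (Fin m)) (τ : Equiv.Perm (Fin n)) :
    (Finset.univ.filter
        (fun π : Equiv.Perm (Fin (m + n)) => firstIs π σ ∧ secondIs π τ)).card
      = (m + n).choose m ∧
    ∀ π : Equiv.Perm (Fin (m + n)), firstIs π σ → secondIs π τ →
      inversions π = inversions σ + inversions τ +
        (Finset.univ.filter (fun p : Fin (m + n) × Fin (m + n) =>
          p.1 < p.2 ∧ m ≤ ((π.symm p.1 : ℕ)) ∧ ((π.symm p.2 : ℕ)) < m)).card := by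
  constructor
  · have hpc : ((Finset.univ : Finset (Fin (m + n))).powersetCard m).card
        = (m + n).choose m := by
      simp [Finset.card_powersetCard]
    rw [← hpc]
    apply Finset.card_bij
      (fun (π : Equiv.Perm (Fin (m + n))) _ =>
        Finset.image (fun a : Fin m => π (Fin.castAdd n a)) Finset.univ)
    · intro π hπ
      rw [Finset.mem_powersetCard_univ,
        Finset.card_image_of_injective _
          (fun a b hab => Fin.castAdd_injective m n (π.injective hab))]
      simp
    · intro π hπ π' hπ' h
      simp only [Finset.mem_filter, Finset.mem_univ, true_and] at hπ hπ'
      exact perm_unique σ τ π π' hπ.1 hπ.2 hπ'.1 hπ'.2 h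
    · intro S hS
      rw [Finset.mem_powersetCard_univ] at hS
      refine ⟨mkPerm σ τ S hS, ?_, mkPerm_image σ τ S hS⟩
      simp only [Finset.mem_filter, Finset.mem_univ, true_and]
      exact ⟨mkPerm_firstIs σ τ S hS, mkPerm_secondIs σ τ S hS⟩
  · intro π h1 h2
    exact inv_split σ τ π h1 h2
end

section
/- For every pattern σ ∈ S_k and every q > 0, the limit ρ(σ,q) = lim_{n→∞} P_n(σ,q)^{1/n} exists, and 0 ≤ ρ(σ,q) ≤ 1. -/
open scoped Classical

/-!
A permutation of `Fin (a + b)` is determined by the set `S` of values taken on its first `a`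
positions together with the standardisations `α`, `β` of its two blocks, and its inversions are
those of `α`, those of `β`, and the pairs of values `t < s` with `s ∈ S`, `t ∉ S`. Hence the
inversion generating function `I(n) = ∑ q ^ inv` satisfies `I(a + b) = I(a) I(b) W(a, b)`, where
`W(a, b)` sums `q ^ (crossing inversions of S)` over `a`-subsets `S`; the case `a = 1` identifies
`I(n)` with `[n]_q!`. Both blocks of a `σ`-avoiding permutation avoid `σ`, so the same sum `A(n)`
over avoiders satisfies `A(a + b) ≤ A(a) A(b) W(a, b)`, i.e. `P_{a+b} ≤ P_a P_b`. Fekete's lemma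
for `log P_n` (or the eventual vanishing of `P_n`) then gives the limit.
-/

open Finset Equiv Filter Topology

theorem Subadditive.tendsto_div_atBot_of_not_bddBelow {u : ℕ → ℝ} (hu : Subadditive u)
    (hbdd : ¬ BddBelow (Set.range fun n => u n / n)) :
    Tendsto (fun n => u n / n) atTop atBot := by
  refine tendsto_atBot.2 fun L => ?_
  obtain ⟨_, ⟨n, rfl⟩, hn⟩ := not_bddBelow_iff.1 hbdd (min L 0)
  have hn0 : n ≠ 0 := by
    rintro rfl
    simp only [CharP.cast_eq_zero, div_zero, lt_min_iff, lt_self_iff_false, and_false] at hn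
  exact (hu.eventually_div_lt_of_div_lt hn0 (hn.trans_le (min_le_left L 0))).mono
    fun _ h => h.le

theorem exists_tendsto_rpow_one_div_of_submultiplicative {u : ℕ → ℝ} (h0 : ∀ n, 0 ≤ u n)
    (hu : ∀ m n, u (m + n) ≤ u m * u n) :
    ∃ ρ, 0 ≤ ρ ∧ Tendsto (fun n : ℕ => u n ^ ((1 : ℝ) / n)) atTop (𝓝 ρ) := by
  by_cases hzero : ∃ n, n ≠ 0 ∧ u n = 0
  · obtain ⟨n₀, hn₀, hu₀⟩ := hzero
    refine ⟨0, le_rfl, tendsto_const_nhds.congr' ?_⟩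
    filter_upwards [eventually_ge_atTop n₀] with n hn
    have hun : u n = 0 := by
      obtain ⟨m, rfl⟩ := Nat.exists_eq_add_of_le hn
      exact le_antisymm (by simpa [hu₀] using hu n₀ m) (h0 _)
    rw [hun, Real.zero_rpow (one_div_ne_zero (by exact_mod_cast (by omega : n ≠ 0)))]
  push Not at hzero
  have hpos_of_ne : ∀ n, n ≠ 0 → 0 < u n := fun n hn => (h0 n).lt_of_ne' (hzero n hn)
  have hpos : ∀ n, 0 < u n := by
    intro n
    rcases eq_or_ne n 0 with rfl | hn
    · have h1 := hpos_of_ne 1 one_ne_zero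
      have : 1 ≤ u 0 := le_of_mul_le_mul_left (by simpa using hu 1 0) h1
      linarith
    · exact hpos_of_ne n hn
  have hlog : Subadditive fun n => Real.log (u n) := fun m n => by
    rw [← Real.log_mul (hpos m).ne' (hpos n).ne']
    exact Real.log_le_log (hpos _) (hu m n)
  have hexp : ∀ n : ℕ, u n ^ ((1 : ℝ) / n) = Real.exp (Real.log (u n) / n) := fun n => by
    rw [Real.rpow_def_of_pos (hpos n), mul_one_div]
  simp_rw [hexp]
  by_cases hbdd : BddBelow (Set.range fun n => Real.log (u n) / n)
  · exact ⟨Real.exp hlog.lim, (Real.exp_pos _).le,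
      (Real.continuous_exp.tendsto _).comp (hlog.tendsto_lim hbdd)⟩
  · exact ⟨0, le_rfl,
      Real.tendsto_exp_atBot.comp (hlog.tendsto_div_atBot_of_not_bddBelow hbdd)⟩

def crossInversions {N : ℕ} (S : Finset (Fin N)) : ℕ :=
  ∑ s ∈ S, #(Sᶜ.filter (· < s))

theorem inversions_eq_sum {n : ℕ} (τ : Perm (Fin n)) :
    inversions τ = ∑ x, ∑ y, if x < y ∧ τ y < τ x then 1 else 0 := by
  rw [inversions, card_filter, ← univ_product_univ, sum_product]

section Shuffle

variable {a b : ℕ}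

theorem card_compl_eq_of_card_eq {S : Finset (Fin (a + b))} (hS : #S = a) : #Sᶜ = b := by
  rw [card_compl, hS, Fintype.card_fin, Nat.add_sub_cancel_left]

/-- The permutation whose first `a` values are those of `S`, in the relative order given by `α`,
and whose last `b` values are those of `Sᶜ`, in the relative order given by `β`. -/
noncomputable def shuffle (α : Perm (Fin a)) (β : Perm (Fin b)) (S : Finset (Fin (a + b)))
    (hS : #S = a) : Perm (Fin (a + b)) :=
  finSumFinEquiv.symm.trans <|
    ((α.trans (S.orderIsoOfFin hS).toEquiv).sumCongr
        (β.trans (Sᶜ.orderIsoOfFin (card_compl_eq_of_card_eq hS)).toEquiv)).trans <|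
      ((Equiv.refl _).sumCongr (subtypeEquivRight fun _ => mem_compl)).trans
        (sumCompl (· ∈ S))

variable (α : Perm (Fin a)) (β : Perm (Fin b)) (S : Finset (Fin (a + b))) (hS : #S = a)

theorem shuffle_castAdd (i : Fin a) :
    shuffle α β S hS (Fin.castAdd b i) = S.orderIsoOfFin hS (α i) := by
  simp [shuffle]

theorem shuffle_natAdd (j : Fin b) :
    shuffle α β S hS (Fin.natAdd a j) =
      Sᶜ.orderIsoOfFin (card_compl_eq_of_card_eq hS) (β j) := by
  simp [shuffle, subtypeEquivRight]
  rfl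

theorem inversions_shuffle :
    inversions (shuffle α β S hS) = inversions α + inversions β + crossInversions S := by
  set eS := S.orderIsoOfFin hS
  set eT := Sᶜ.orderIsoOfFin (card_compl_eq_of_card_eq hS)
  have castAdd_lt_natAdd (i : Fin a) (j : Fin b) : Fin.castAdd b i < Fin.natAdd a j := by
    simp only [Fin.lt_def, Fin.val_natAdd, Fin.val_castAdd]; omega
  have left : (∑ i : Fin a, ∑ i' : Fin a, if Fin.castAdd b i < Fin.castAdd b i' ∧
      shuffle α β S hS (Fin.castAdd b i') < shuffle α β S hS (Fin.castAdd b i) then 1 else 0) =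
      inversions α := by
    simp only [inversions_eq_sum, shuffle_castAdd, Subtype.coe_lt_coe, OrderIso.lt_iff_lt,
      (Fin.strictMono_castAdd b).lt_iff_lt]
  have right : (∑ j : Fin b, ∑ j' : Fin b, if Fin.natAdd a j < Fin.natAdd a j' ∧
      shuffle α β S hS (Fin.natAdd a j') < shuffle α β S hS (Fin.natAdd a j) then 1 else 0) =
      inversions β := by
    simp only [inversions_eq_sum, shuffle_natAdd, Subtype.coe_lt_coe, OrderIso.lt_iff_lt,
      Fin.natAdd_lt_natAdd_iff]
  have right_left : (∑ j : Fin b, ∑ i : Fin a, if Fin.natAdd a j < Fin.castAdd b i ∧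
      shuffle α β S hS (Fin.castAdd b i) < shuffle α β S hS (Fin.natAdd a j) then 1 else 0) =
      0 := by
    exact sum_eq_zero fun j _ => sum_eq_zero fun i _ =>
      if_neg fun h => lt_asymm h.1 (castAdd_lt_natAdd i j)
  have left_right : (∑ i : Fin a, ∑ j : Fin b, if Fin.castAdd b i < Fin.natAdd a j ∧
      shuffle α β S hS (Fin.natAdd a j) < shuffle α β S hS (Fin.castAdd b i) then 1 else 0) =
      crossInversions S := by
    calc _ = ∑ i : Fin a, ∑ j : Fin b,
            if (eT (β j) : Fin (a + b)) < eS (α i) then 1 else 0 := by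
          simp only [castAdd_lt_natAdd, true_and, shuffle_castAdd, shuffle_natAdd, eS, eT]
      _ = ∑ s : S, ∑ t : (Sᶜ : Finset _), if (t : Fin (a + b)) < s then 1 else 0 :=
          Fintype.sum_equiv (α.trans eS.toEquiv) _ _ fun i =>
            Fintype.sum_equiv (β.trans eT.toEquiv) _ _ fun j => rfl
      _ = crossInversions S := by
          rw [crossInversions, ← sum_coe_sort S]
          simp_rw [card_filter, ← sum_coe_sort Sᶜ]
  rw [inversions_eq_sum, Fin.sum_univ_add]
  simp only [Fin.sum_univ_add]
  rw [sum_add_distrib, sum_add_distrib, left, right, right_left, left_right]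
  ring

end Shuffle

section ShuffleEquiv

variable {a b : ℕ}

theorem mem_iff_exists_shuffle_castAdd (α : Perm (Fin a)) (β : Perm (Fin b))
    {S : Finset (Fin (a + b))} (hS : #S = a) (x : Fin (a + b)) :
    x ∈ S ↔ ∃ i, shuffle α β S hS (Fin.castAdd b i) = x := by
  simp only [shuffle_castAdd]
  refine ⟨fun hx => ⟨α.symm ((S.orderIsoOfFin hS).symm ⟨x, hx⟩), by simp⟩, ?_⟩
  rintro ⟨i, rfl⟩
  exact (S.orderIsoOfFin hS (α i)).2

theorem eq_of_shuffle_eq {α α' : Perm (Fin a)} {β β' : Perm (Fin b)}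
    {S S' : Finset (Fin (a + b))} {hS : #S = a} {hS' : #S' = a}
    (h : shuffle α β S hS = shuffle α' β' S' hS') : α = α' ∧ β = β' ∧ S = S' := by
  obtain rfl : S = S' := by
    ext x
    rw [mem_iff_exists_shuffle_castAdd α β hS, mem_iff_exists_shuffle_castAdd α' β' hS', h]
  refine ⟨?_, ?_, rfl⟩
  · ext i
    have := congr($h (Fin.castAdd b i))
    rw [shuffle_castAdd, shuffle_castAdd, Subtype.coe_inj, (S.orderIsoOfFin hS).apply_eq_iff_eq]
      at this
    rw [this]
  · ext j
    have := congr($h (Fin.natAdd a j))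
    rw [shuffle_natAdd, shuffle_natAdd, Subtype.coe_inj, OrderIso.apply_eq_iff_eq] at this
    rw [this]

theorem card_perm_prod_perm_prod_powersetCard :
    Fintype.card (Perm (Fin a) × Perm (Fin b) × powersetCard a (univ : Finset (Fin (a + b)))) =
      Fintype.card (Perm (Fin (a + b))) := by
  simp only [Fintype.card_prod, Fintype.card_perm, Fintype.card_fin, Fintype.card_coe,
    card_powersetCard, card_univ]
  rw [← Nat.choose_mul_factorial_mul_factorial (Nat.le_add_right a b), Nat.add_sub_cancel_left]
  ring

/-- The permutation whose first `a` values are those of `S`, in the relative order given by `α`,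
and whose last `b` values are those of `Sᶜ`, in the relative order given by `β`. -/
noncomputable def shuffleEquiv (a b : ℕ) :
    Perm (Fin a) × Perm (Fin b) × powersetCard a (univ : Finset (Fin (a + b))) ≃
      Perm (Fin (a + b)) :=
  Equiv.ofBijective (fun x => shuffle x.1 x.2.1 x.2.2 (mem_powersetCard_univ.1 x.2.2.2)) <|
    (Fintype.bijective_iff_injective_and_card _).2
      ⟨fun x y h => by
        obtain ⟨h₁, h₂, h₃⟩ := eq_of_shuffle_eq h
        exact Prod.ext h₁ (Prod.ext h₂ (Subtype.ext h₃)),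
      card_perm_prod_perm_prod_powersetCard⟩

theorem inversions_shuffleEquiv
    (x : Perm (Fin a) × Perm (Fin b) × powersetCard a (univ : Finset (Fin (a + b)))) :
    inversions (shuffleEquiv a b x) =
      inversions x.1 + inversions x.2.1 + crossInversions (x.2.2 : Finset (Fin (a + b))) :=
  inversions_shuffle _ _ _ _

end ShuffleEquiv

theorem occursAt_add_of_apply_eq {m n N : ℕ} {σ : Perm (Fin m)} {α : Perm (Fin n)}
    {π : Perm (Fin N)} {g : Fin n → Fin N} (hg : StrictMono g) {d : ℕ} (hdN : d + n ≤ N)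
    (hπ : ∀ (i : Fin n) (x : Fin N), (x : ℕ) = d + i → π x = g (α i)) {j : ℕ}
    (h : occursAt σ α j) : occursAt σ π (d + j) := by
  obtain ⟨hjn, hσ⟩ := h
  refine ⟨by omega, fun u v => ?_⟩
  rw [hσ, hπ ⟨j + u, by omega⟩ _ (Nat.add_assoc _ _ _),
    hπ ⟨j + v, by omega⟩ _ (Nat.add_assoc _ _ _), hg.lt_iff_lt]

section ShuffleAvoids

variable {a b m : ℕ} {σ : Perm (Fin m)} {α : Perm (Fin a)} {β : Perm (Fin b)}
  {S : Finset (Fin (a + b))} {hS : #S = a}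

theorem avoids_left_of_avoids_shuffle (h : avoids σ (shuffle α β S hS)) : avoids σ α :=
  fun j hj => h (0 + j) <| occursAt_add_of_apply_eq (Subtype.strictMono_coe _ |>.comp
    (S.orderIsoOfFin hS).strictMono) (by omega) (fun i x hx => by
      rw [show x = Fin.castAdd b i from Fin.ext (by simp [hx]), shuffle_castAdd]; rfl) hj

theorem avoids_right_of_avoids_shuffle (h : avoids σ (shuffle α β S hS)) : avoids σ β :=
  fun j hj => h (a + j) <| occursAt_add_of_apply_eq (Subtype.strictMono_coe _ |>.comp
    (Sᶜ.orderIsoOfFin (card_compl_eq_of_card_eq hS)).strictMono) le_rfl (fun i x hx => by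
      rw [show x = Fin.natAdd a i from Fin.ext (by simp [hx]), shuffle_natAdd]; rfl) hj

end ShuffleAvoids

theorem Fintype.sum_prod_prod_mul {A B C R : Type*} [Fintype A] [Fintype B] [Fintype C]
    [CommSemiring R] (f : A → R) (g : B → R) (h : C → R) :
    ∑ x : A × B × C, f x.1 * g x.2.1 * h x.2.2 = (∑ x, f x) * (∑ y, g y) * ∑ z, h z := by
  simp_rw [Fintype.sum_prod_type, mul_assoc, ← mul_sum, ← sum_mul]

noncomputable def inversionSum (q : ℝ) (n : ℕ) : ℝ :=
  ∑ τ : Perm (Fin n), q ^ inversions τ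

noncomputable def avoiderInversionSum {m : ℕ} (σ : Perm (Fin m)) (q : ℝ) (n : ℕ) : ℝ :=
  ∑ τ : Perm (Fin n), if avoids σ τ then q ^ inversions τ else 0

noncomputable def crossInversionSum (q : ℝ) (a b : ℕ) : ℝ :=
  ∑ S ∈ powersetCard a (univ : Finset (Fin (a + b))), q ^ crossInversions S

theorem inversionSum_add (q : ℝ) (a b : ℕ) :
    inversionSum q (a + b) = inversionSum q a * inversionSum q b * crossInversionSum q a b := by
  simp only [inversionSum, crossInversionSum, ← sum_coe_sort (powersetCard a _)]
  rw [← Fintype.sum_prod_prod_mul, ← (shuffleEquiv a b).sum_comp]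
  simp only [inversions_shuffleEquiv, pow_add]

theorem avoiderInversionSum_add_le {m : ℕ} (σ : Perm (Fin m)) {q : ℝ} (hq : 0 ≤ q)
    (a b : ℕ) :
    avoiderInversionSum σ q (a + b) ≤
      avoiderInversionSum σ q a * avoiderInversionSum σ q b * crossInversionSum q a b := by
  simp only [avoiderInversionSum, crossInversionSum, ← sum_coe_sort (powersetCard a _)]
  rw [← Fintype.sum_prod_prod_mul, ← (shuffleEquiv a b).sum_comp]
  refine sum_le_sum fun x _ => ?_
  by_cases h : avoids σ (shuffleEquiv a b x)
  · rw [if_pos h, if_pos (avoids_left_of_avoids_shuffle h),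
      if_pos (avoids_right_of_avoids_shuffle h), inversions_shuffleEquiv, pow_add, pow_add]
  · rw [if_neg h]
    positivity

theorem crossInversions_singleton {N : ℕ} (t : Fin N) : crossInversions {t} = t := by
  rw [crossInversions, sum_singleton, ← Fin.card_Iio]
  congr 1
  ext x
  simp only [mem_filter, mem_compl, mem_singleton, mem_Iio, and_iff_right_iff_imp]
  exact ne_of_lt

theorem crossInversionSum_one (q : ℝ) (n : ℕ) : crossInversionSum q 1 n = qint q (1 + n) := by
  rw [crossInversionSum, powersetCard_one, sum_map, qint, ← Fin.sum_univ_eq_sum_range]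
  simp only [Function.Embedding.coeFn_mk, crossInversions_singleton]

theorem inversionSum_one (q : ℝ) : inversionSum q 1 = 1 := by
  simp [inversionSum, inversions, Fin.lt_def, Fin.val_eq_zero]

theorem inversionSum_eq_qfact (q : ℝ) (n : ℕ) : inversionSum q n = qfact q n := by
  induction n with
  | zero => simp [inversionSum, qfact, inversions]
  | succ n ih =>
    have h := inversionSum_add q 1 n
    rw [crossInversionSum_one, inversionSum_one, one_mul, ih] at h
    rw [qfact, prod_range_succ, ← qfact, add_comm n 1, h]

theorem inversionSum_pos {q : ℝ} (hq : 0 < q) (n : ℕ) : 0 < inversionSum q n :=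
  sum_pos (fun _ _ => by positivity) univ_nonempty

section Pn

variable {k : ℕ} (σ : Perm (Fin k)) {q : ℝ}

theorem Pn_eq_div (n : ℕ) : Pn k σ q n = avoiderInversionSum σ q n / inversionSum q n := by
  rw [Pn, sum_filter, inversionSum_eq_qfact]; rfl

theorem Pn_nonneg (hq : 0 ≤ q) (n : ℕ) : 0 ≤ Pn k σ q n := by
  rw [Pn_eq_div]
  exact div_nonneg (sum_nonneg fun _ _ => by positivity) (sum_nonneg fun _ _ => by positivity)

theorem Pn_le_one (hq : 0 < q) (n : ℕ) : Pn k σ q n ≤ 1 := by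
  rw [Pn_eq_div, div_le_one (inversionSum_pos hq n)]
  refine sum_le_sum fun τ _ => ?_
  split_ifs
  exacts [le_rfl, by positivity]

theorem Pn_add_le_mul (hq : 0 < q) (a b : ℕ) :
    Pn k σ q (a + b) ≤ Pn k σ q a * Pn k σ q b := by
  have hI := inversionSum_pos hq (a + b)
  rw [inversionSum_add] at hI
  rw [Pn_eq_div, Pn_eq_div, Pn_eq_div, div_mul_div_comm, inversionSum_add,
    ← mul_div_mul_right (avoiderInversionSum σ q a * _) _ (right_ne_zero_of_mul hI.ne')]
  exact div_le_div_of_nonneg_right (avoiderInversionSum_add_le σ hq.le a b) hI.le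

end Pn

/-- the growth rate `ρ(σ,q) = lim_n P_n(σ,q)^{1/n}` exists and lies in `[0,1]`. -/
theorem growth_rate_exists (k : ℕ) (σ : Equiv.Perm (Fin k)) (q : ℝ) (hq : 0 < q) :
    ∃ ρ : ℝ, Filter.Tendsto (fun n : ℕ => (Pn k σ q n) ^ ((1 : ℝ) / n))
        Filter.atTop (nhds ρ) ∧ 0 ≤ ρ ∧ ρ ≤ 1 := by
  obtain ⟨ρ, hρ, hlim⟩ := exists_tendsto_rpow_one_div_of_submultiplicative
    (Pn_nonneg σ hq.le) (Pn_add_le_mul σ hq)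
  refine ⟨ρ, hlim, hρ, le_of_tendsto' hlim fun n => ?_⟩
  exact Real.rpow_le_one (Pn_nonneg σ hq.le n) (Pn_le_one σ hq n) (by positivity)
end

section
/- For m ≥ 2, the k-clusters of length n with respect to the monotone pattern 12...m are in bijection with compositions of n−m into k−1 parts each of size at most m−1. In particular, the number of k-clusters of length n with respect to 12...m equals the number of sequences (i_1,...,i_k) with i_1 = 1, i_k = n−m+1, and 1 ≤ i_{j+1} − i_j ≤ m−1 for all j. -/
open scoped Classical

/-- `(π; idx 0, …, idx (k-1))` is a `k`-cluster of length `n` with respect to `σ ∈ S_m`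
(0-indexed positions). -/
def IsCluster {m n k : ℕ} (σ : Equiv.Perm (Fin m)) (π : Equiv.Perm (Fin n))
    (idx : Fin k → ℕ) : Prop :=
  StrictMono idx ∧
  (∀ j : Fin k, (j : ℕ) = 0 → idx j = 0) ∧
  (∀ j : Fin k, (j : ℕ) = k - 1 → idx j + m = n) ∧
  (∀ j : Fin k, ∀ h : (j : ℕ) + 1 < k, idx ⟨(j : ℕ) + 1, h⟩ ≤ idx j + (m - 1)) ∧
  (∀ j : Fin k, occursAt σ π (idx j))

/-! In a cluster consecutive windows overlap or abut, so every pair of adjacent positions lies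
in a common window; for the pattern `12⋯m` this makes `π` increase at every step, so `π = id`.
A cluster is therefore determined by its positions `0 = i₁ < ⋯ < i_k = n - m`, whose
successive gaps form a composition of `n - m` into parts in `[1, m - 1]`, with partial sums
as the inverse map. -/

theorem Fin.strictMono_of_lt_add_one {α : Type*} [Preorder α] {N : ℕ} {f : Fin N → α}
    (h : ∀ (i : Fin N) (hi : (i : ℕ) + 1 < N), f i < f ⟨i + 1, hi⟩) : StrictMono f := by
  cases N with
  | zero => exact fun a => a.elim0
  | succ n => exact Fin.strictMono_iff_lt_succ.2 fun i => h i.castSucc (by simp)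

section PartialSums

variable {k : ℕ}

def gaps (idx : Fin k → ℕ) (j : Fin (k - 1)) : ℕ :=
  idx ⟨j + 1, by omega⟩ - idx ⟨j, by omega⟩

def partialSums (c : Fin (k - 1) → ℕ) (j : Fin k) : ℕ :=
  ∑ i : Fin j, c ⟨i, by omega⟩

theorem partialSums_zero (c : Fin (k - 1) → ℕ) (hk : 0 < k) :
    partialSums c ⟨0, hk⟩ = 0 := by
  simp [partialSums]

theorem partialSums_next (c : Fin (k - 1) → ℕ) (j : Fin k) (hj : (j : ℕ) + 1 < k) :
    partialSums c ⟨j + 1, hj⟩ = partialSums c j + c ⟨j, by omega⟩ := by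
  simp [partialSums, Fin.sum_univ_castSucc]

theorem partialSums_last (c : Fin (k - 1) → ℕ) (hk : 0 < k) :
    partialSums c ⟨k - 1, by omega⟩ = ∑ j, c j := by
  simp [partialSums]

theorem gaps_partialSums (c : Fin (k - 1) → ℕ) : gaps (partialSums c) = c := by
  ext j
  simp [gaps, partialSums_next c ⟨j, by omega⟩]

theorem partialSums_gaps {idx : Fin k → ℕ} (hk : 0 < k) (h0 : idx ⟨0, hk⟩ = 0)
    (hmono : ∀ (j : Fin k) (hj : (j : ℕ) + 1 < k), idx j ≤ idx ⟨j + 1, hj⟩) :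
    partialSums (gaps idx) = idx := by
  ext ⟨j, hj⟩
  induction j with
  | zero => rw [partialSums_zero, h0]
  | succ j ih =>
    rw [partialSums_next _ ⟨j, by omega⟩ hj, ih]
    have hle : idx ⟨j, by omega⟩ ≤ idx ⟨j + 1, hj⟩ := hmono ⟨j, by omega⟩ hj
    simp only [gaps]
    omega

theorem partialSums_injective : Function.Injective (partialSums (k := k)) :=
  Function.LeftInverse.injective gaps_partialSums

theorem positions_eq_image_partialSums (m n : ℕ) (hk : 0 < k) :
    {idx : Fin k → ℕ | idx ⟨0, hk⟩ = 0 ∧ idx ⟨k - 1, by omega⟩ = n - m ∧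
      ∀ (j : Fin k) (h : (j : ℕ) + 1 < k),
        idx j + 1 ≤ idx ⟨j + 1, h⟩ ∧ idx ⟨j + 1, h⟩ ≤ idx j + (m - 1)} =
    partialSums '' {c | (∀ j, 1 ≤ c j ∧ c j ≤ m - 1) ∧ ∑ j, c j = n - m} := by
  ext idx
  constructor
  · rintro ⟨h0, hlast, hstep⟩
    have hsum := partialSums_gaps hk h0 fun j hj => (Nat.le_succ _).trans (hstep j hj).1
    refine ⟨gaps idx, ⟨fun j => ?_, ?_⟩, hsum⟩
    · have := hstep ⟨j, by omega⟩ (by simp; omega)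
      dsimp only [gaps] at this ⊢
      omega
    · rw [← partialSums_last _ hk, hsum, hlast]
  · rintro ⟨c, ⟨hc, hsum⟩, rfl⟩
    refine ⟨partialSums_zero c hk, (partialSums_last c hk).trans hsum, fun j hj => ?_⟩
    rw [partialSums_next c j hj]
    have := hc ⟨j, by omega⟩
    omega

end PartialSums

section Cluster

variable {m n k : ℕ}

theorem occursAt_refl_apply_lt {π : Equiv.Perm (Fin n)} {j : ℕ}
    (h : occursAt (Equiv.refl (Fin m)) π j) {x y : Fin n} (hjx : j ≤ x) (hxy : x < y)
    (hy : (y : ℕ) < j + m) : π x < π y := by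
  obtain ⟨hw, hocc⟩ := h
  have key := (hocc ⟨x - j, by omega⟩ ⟨y - j, by omega⟩).1
    (by simp only [Equiv.refl_apply, Fin.mk_lt_mk]; omega)
  convert key using 2 <;> ext <;> dsimp only <;> omega

theorem occursAt_refl_refl {j : ℕ} (h : j + m ≤ n) :
    occursAt (Equiv.refl (Fin m)) (Equiv.refl (Fin n)) j :=
  ⟨h, fun a b => by simp only [Equiv.refl_apply, Fin.lt_def]; omega⟩

theorem IsCluster.exists_window {σ : Equiv.Perm (Fin m)} {π : Equiv.Perm (Fin n)}
    {idx : Fin k → ℕ} (hcl : IsCluster σ π idx) (hk : 0 < k) {i : ℕ} (hi : i + 1 < n) :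
    ∃ j, idx j ≤ i ∧ i + 1 < idx j + m := by
  obtain ⟨hmono, h0, hlast, hgap, -⟩ := hcl
  let S := Finset.univ.filter fun j => idx j ≤ i
  have hS : S.Nonempty := ⟨⟨0, hk⟩, by simp [S, h0]⟩
  refine ⟨S.max' hS, (Finset.mem_filter.1 (S.max'_mem hS)).2, ?_⟩
  set j := S.max' hS
  by_cases hj : (j : ℕ) + 1 < k
  · have hnext : i < idx ⟨j + 1, hj⟩ := by
      by_contra! hle
      have := S.le_max' ⟨j + 1, hj⟩ (by simp [S, hle])
      simp [Fin.le_def, j] at this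
    have := hmono (show j < ⟨j + 1, hj⟩ from Fin.lt_def.2 (Nat.lt_succ_self _))
    have := hgap j hj
    omega
  · have := hlast j (by omega)
    omega

theorem IsCluster.perm_eq_refl {π : Equiv.Perm (Fin n)} {idx : Fin k → ℕ}
    (hcl : IsCluster (Equiv.refl (Fin m)) π idx) (hk : 0 < k) : π = Equiv.refl (Fin n) := by
  have hπ : StrictMono π := Fin.strictMono_of_lt_add_one fun x hx => by
    obtain ⟨j, hjx, hxj⟩ := hcl.exists_window hk hx
    exact occursAt_refl_apply_lt (hcl.2.2.2.2 j) hjx (Fin.lt_def.2 (Nat.lt_succ_self _)) hxj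
  exact Equiv.ext fun x => hπ.apply_eq

theorem clusters_refl_eq_image (hk : 0 < k) (hn : m ≤ n) :
    {p : Equiv.Perm (Fin n) × (Fin k → ℕ) | IsCluster (Equiv.refl (Fin m)) p.1 p.2} =
    Prod.mk (Equiv.refl (Fin n)) ''
      {idx : Fin k → ℕ | idx ⟨0, hk⟩ = 0 ∧ idx ⟨k - 1, by omega⟩ = n - m ∧
        ∀ (j : Fin k) (h : (j : ℕ) + 1 < k),
          idx j + 1 ≤ idx ⟨j + 1, h⟩ ∧ idx ⟨j + 1, h⟩ ≤ idx j + (m - 1)} := by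
  ext ⟨π, idx⟩
  simp only [Set.mem_ofPred_eq, Set.mem_image, Prod.mk.injEq]
  constructor
  · intro hcl
    have hπ := hcl.perm_eq_refl hk
    obtain ⟨hmono, h0, hlast, hgap, -⟩ := hcl
    have hend := hlast ⟨k - 1, by omega⟩ rfl
    refine ⟨idx, ⟨h0 _ rfl, by omega, fun j hj => ⟨?_, hgap j hj⟩⟩, hπ.symm, rfl⟩
    exact hmono (Fin.lt_def.2 (Nat.lt_succ_self _))
  · rintro ⟨idx, ⟨h0, hlast, hstep⟩, rfl, rfl⟩
    have hmono : StrictMono idx := Fin.strictMono_of_lt_add_one fun j hj => (hstep j hj).1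
    refine ⟨hmono, fun j hj => ?_, fun j hj => ?_, fun j hj => (hstep j hj).2, fun j => ?_⟩
    · rwa [show j = ⟨0, hk⟩ from Fin.ext hj]
    · rw [show j = ⟨k - 1, by omega⟩ from Fin.ext hj, hlast]
      omega
    · have : idx j ≤ idx ⟨k - 1, by omega⟩ :=
        hmono.monotone (Fin.le_def.2 (Nat.le_sub_one_of_lt j.isLt))
      exact occursAt_refl_refl (by omega)

end Cluster

/-- `k`-clusters of length `n` with respect to `12⋯m` are in bijection with
compositions of `n-m` into `k-1` parts of size at most `m-1`; in particular their number
equals the number of position sequences with first term `0` (i.e. `1`, 1-indexed), last term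
`n-m` (i.e. `n-m+1`, 1-indexed), and consecutive differences in `[1, m-1]`. -/
theorem clusters_monotone_eq_compositions (m n k : ℕ) (hk : 1 ≤ k)
    (hn : m ≤ n) :
    ({p : Equiv.Perm (Fin n) × (Fin k → ℕ) |
        IsCluster (Equiv.refl (Fin m)) p.1 p.2}.ncard
      = {c : Fin (k - 1) → ℕ |
          (∀ j, 1 ≤ c j ∧ c j ≤ m - 1) ∧ ∑ j, c j = n - m}.ncard) ∧
    ({p : Equiv.Perm (Fin n) × (Fin k → ℕ) |
        IsCluster (Equiv.refl (Fin m)) p.1 p.2}.ncard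
      = {idx : Fin k → ℕ | idx ⟨0, hk⟩ = 0 ∧ idx ⟨k - 1, by omega⟩ = n - m ∧
          ∀ j : Fin k, ∀ h : (j : ℕ) + 1 < k,
            idx j + 1 ≤ idx ⟨(j : ℕ) + 1, h⟩ ∧
            idx ⟨(j : ℕ) + 1, h⟩ ≤ idx j + (m - 1)}.ncard) := by
  have hclusters := congrArg Set.ncard (clusters_refl_eq_image hk hn)
  rw [Set.ncard_image_of_injective _ (Prod.mk_right_injective _)] at hclusters
  have hpositions := congrArg Set.ncard (positions_eq_image_partialSums m n hk)
  rw [Set.ncard_image_of_injective _ partialSums_injective] at hpositions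
  exact ⟨hclusters.trans hpositions, hclusters⟩
end

section
/- For q ≥ 1 and every n ≥ 1, the Mallows(q) avoidance probabilities satisfy P_n(132, q) ≤ P_n(123, q). Equivalently, ∑_{π ∈ S_n(132)} q^{inv(π)} ≤ ∑_{π ∈ S_n(123)} q^{inv(π)} for q ≥ 1. -/
open scoped Classical

namespace CP

variable {n : ℕ}

def pv (π : Equiv.Perm (Fin n)) (j : ℕ) : ℕ :=
  if h : j < n then (π ⟨j, h⟩ : ℕ) else 0

lemma pv_mk (π : Equiv.Perm (Fin n)) {j : ℕ} (h : j < n) :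
    ((π ⟨j, h⟩ : Fin n) : ℕ) = pv π j := by simp [pv, h]

def DR (π : Equiv.Perm (Fin n)) (i : ℕ) : Prop :=
  i + 3 ≤ n ∧ pv π i < pv π (i+1) ∧ pv π (i+1) < pv π (i+2)

def V (π : Equiv.Perm (Fin n)) (i : ℕ) : Prop :=
  i + 3 ≤ n ∧ pv π i < pv π (i+2) ∧ pv π (i+2) < pv π (i+1)

lemma occursAt_refl_iff (π : Equiv.Perm (Fin n)) (j : ℕ) :
    occursAt (Equiv.refl (Fin 3)) π j ↔ DR π j := by
  constructor
  · rintro ⟨h, H⟩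
    have h1 := Fin.lt_def.mp ((H 0 1).mp (by decide))
    have h2 := Fin.lt_def.mp ((H 1 2).mp (by decide))
    rw [pv_mk, pv_mk] at h1 h2
    exact ⟨h, h1, h2⟩
  · rintro ⟨h, h1, h2⟩
    refine ⟨h, ?_⟩
    intro a b
    fin_cases a <;> fin_cases b <;>
      first
        | exact iff_of_true (by decide)
            (by simp only [Fin.lt_def, pv_mk, Fin.val_mk, Nat.add_zero]; omega)
        | exact iff_of_false (by decide)
            (by simp only [Fin.lt_def, pv_mk, Fin.val_mk, Nat.add_zero]; omega)

lemma occursAt_swap_iff (π : Equiv.Perm (Fin n)) (j : ℕ) :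
    occursAt (Equiv.swap (1 : Fin 3) 2) π j ↔ V π j := by
  constructor
  · rintro ⟨h, H⟩
    have h1 := Fin.lt_def.mp ((H 0 2).mp (by decide))
    have h2 := Fin.lt_def.mp ((H 2 1).mp (by decide))
    rw [pv_mk, pv_mk] at h1 h2
    exact ⟨h, h1, h2⟩
  · rintro ⟨h, h1, h2⟩
    refine ⟨h, ?_⟩
    intro a b
    fin_cases a <;> fin_cases b <;>
      first
        | exact iff_of_true (by decide)
            (by simp only [Fin.lt_def, pv_mk, Fin.val_mk, Nat.add_zero]; omega)
        | exact iff_of_false (by decide)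
            (by simp only [Fin.lt_def, pv_mk, Fin.val_mk, Nat.add_zero]; omega)


/-- the underlying position map: swap `i+1 ↔ i+2` for every `i ∈ S` -/
def gfun (S : Finset ℕ) (p : ℕ) : ℕ :=
  if p ≠ 0 ∧ p - 1 ∈ S then p + 1 else if 2 ≤ p ∧ p - 2 ∈ S then p - 1 else p

/-- totalized version that is always an involution on `[0,n)` -/
def gclamp (S : Finset ℕ) (n p : ℕ) : ℕ :=
  if gfun S p < n ∧ gfun S (gfun S p) = p ∧ p < n then gfun S p else p

lemma gclamp_lt {S : Finset ℕ} {p : ℕ} (hp : p < n) : gclamp S n p < n := by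
  unfold gclamp; split
  · next h => exact h.1
  · exact hp

lemma gclamp_invol (S : Finset ℕ) (n : ℕ) : Function.Involutive (gclamp S n) := by
  intro p
  by_cases h : gfun S p < n ∧ gfun S (gfun S p) = p ∧ p < n
  · have e : gclamp S n p = gfun S p := by rw [gclamp, if_pos h]
    rw [e, gclamp, if_pos ⟨by rw [h.2.1]; exact h.2.2, by rw [h.2.1], h.1⟩]
    exact h.2.1
  · have e : gclamp S n p = p := by rw [gclamp, if_neg h]
    rw [e]; exact e

/-- the permutation of `Fin n` swapping positions `i+1, i+2` for `i ∈ S` -/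
def sigmaPerm (S : Finset ℕ) (n : ℕ) : Equiv.Perm (Fin n) :=
  Function.Involutive.toPerm
    (fun p => ⟨gclamp S n p, gclamp_lt p.isLt⟩)
    (fun p => Fin.ext (gclamp_invol S n p))

lemma sigmaPerm_apply (S : Finset ℕ) (p : Fin n) :
    sigmaPerm S n p = ⟨gclamp S n p, gclamp_lt p.isLt⟩ := rfl

lemma pv_sigma (π : Equiv.Perm (Fin n)) (S : Finset ℕ) {p : ℕ} (hp : p < n) :
    pv (π * sigmaPerm S n) p = pv π (gclamp S n p) := by
  have h2 : gclamp S n p < n := gclamp_lt hp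
  simp only [pv, dif_pos hp, dif_pos h2]
  rfl

lemma gfun_at1 {S : Finset ℕ} {i : ℕ} (hi : i ∈ S) : gfun S (i+1) = i+2 := by
  rw [gfun, if_pos ⟨Nat.succ_ne_zero i, by simpa using hi⟩]

lemma gfun_at2 {S : Finset ℕ} (hc : ∀ i ∈ S, i + 1 ∉ S) {i : ℕ} (hi : i ∈ S) :
    gfun S (i+2) = i+1 := by
  have hne : ¬(i + 2 ≠ 0 ∧ i + 2 - 1 ∈ S) := by
    rintro ⟨-, h⟩; exact hc i hi (by simpa using h)
  rw [gfun, if_neg hne, if_pos ⟨by omega, by simpa using hi⟩]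
  omega

lemma gfun_untouched {S : Finset ℕ} {p : ℕ} (h1 : p = 0 ∨ p - 1 ∉ S)
    (h2 : p ≤ 1 ∨ p - 2 ∉ S) : gfun S p = p := by
  rw [gfun, if_neg (by rintro ⟨a, b⟩; rcases h1 with h | h <;> simp_all),
    if_neg (by rintro ⟨a, b⟩; rcases h2 with h | h <;> [omega; exact h b])]

lemma gclamp_at1 {S : Finset ℕ} (hb : ∀ i ∈ S, i + 3 ≤ n) (hc : ∀ i ∈ S, i + 1 ∉ S)
    {i : ℕ} (hi : i ∈ S) : gclamp S n (i+1) = i+2 := by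
  have h3 := hb i hi
  rw [gclamp, if_pos] <;> rw [gfun_at1 hi]
  exact ⟨by omega, by rw [gfun_at2 hc hi], by omega⟩

lemma gclamp_at2 {S : Finset ℕ} (hb : ∀ i ∈ S, i + 3 ≤ n) (hc : ∀ i ∈ S, i + 1 ∉ S)
    {i : ℕ} (hi : i ∈ S) : gclamp S n (i+2) = i+1 := by
  have h3 := hb i hi
  rw [gclamp, if_pos] <;> rw [gfun_at2 hc hi]
  exact ⟨by omega, by rw [gfun_at1 hi], by omega⟩

lemma gclamp_untouched {S : Finset ℕ} {p : ℕ} (h1 : p = 0 ∨ p - 1 ∉ S)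
    (h2 : p ≤ 1 ∨ p - 2 ∉ S) : gclamp S n p = p := by
  have h := gfun_untouched (S := S) h1 h2
  rw [gclamp]; split <;> simp [h]



lemma swap_mono {a b : Fin n} (hab : (a:ℕ)+1 = b) :
    ∀ x y : Fin n, x < y → ¬(x = a ∧ y = b) → Equiv.swap a b x < Equiv.swap a b y := by
  intro x y hxy hne
  have hab2 : a < b := by rw [Fin.lt_def]; omega
  by_cases hxa : x = a
  · subst hxa
    by_cases hyb : y = b
    · exact absurd ⟨rfl, hyb⟩ hne
    · have hya : y ≠ x := ne_of_gt hxy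
      rw [Equiv.swap_apply_left, Equiv.swap_apply_of_ne_of_ne hya hyb]
      rw [Fin.lt_def] at hxy ⊢
      have : (y:ℕ) ≠ (b:ℕ) := fun hh => hyb (Fin.ext hh)
      omega
  · by_cases hxb : x = b
    · subst hxb
      have hyb : y ≠ x := ne_of_gt hxy
      have hya : y ≠ a := ne_of_gt (lt_trans hab2 hxy)
      rw [Equiv.swap_apply_right, Equiv.swap_apply_of_ne_of_ne hya hyb]
      rw [Fin.lt_def] at hxy ⊢
      omega
    · rw [Equiv.swap_apply_of_ne_of_ne hxa hxb]
      by_cases hya : y = a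
      · subst hya
        rw [Equiv.swap_apply_left]
        rw [Fin.lt_def] at hxy ⊢
        omega
      · by_cases hyb : y = b
        · subst hyb
          rw [Equiv.swap_apply_right]
          rw [Fin.lt_def] at hxy ⊢
          have : (x:ℕ) ≠ (a:ℕ) := fun hh => hxa (Fin.ext hh)
          omega
        · rw [Equiv.swap_apply_of_ne_of_ne hya hyb]
          exact hxy

lemma inversions_mul_swap (π : Equiv.Perm (Fin n)) {a b : Fin n}
    (hab : (a:ℕ)+1 = b) (h : π a < π b) :
    inversions (π * Equiv.swap a b) = inversions π + 1 := by
  classical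
  set t := Equiv.swap a b with ht
  have hab' : a < b := by rw [Fin.lt_def]; omega
  have htaa : t a = b := Equiv.swap_apply_left a b
  have htbb : t b = a := Equiv.swap_apply_right a b
  have htt : ∀ x, t (t x) = x := fun x => Equiv.swap_apply_self a b x
  set A' := Finset.univ.filter
    (fun p : Fin n × Fin n => p.1 < p.2 ∧ (π * t) p.2 < (π * t) p.1) with hA'
  set A := Finset.univ.filter
    (fun p : Fin n × Fin n => p.1 < p.2 ∧ π p.2 < π p.1) with hA
  have hmem : (a, b) ∈ A' := by
    simp only [hA', Finset.mem_filter, Finset.mem_univ, true_and]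
    refine ⟨hab', ?_⟩
    show π (t b) < π (t a)
    rw [htaa, htbb]; exact h
  have hcard : (A'.erase (a, b)).card = A.card := by
    apply Finset.card_bij' (fun p _ => (t p.1, t p.2)) (fun q _ => (t q.1, t q.2))
    · intro p hp
      rw [Finset.mem_erase] at hp
      obtain ⟨hne, hp⟩ := hp
      simp only [hA', Finset.mem_filter, Finset.mem_univ, true_and] at hp
      simp only [hA, Finset.mem_filter, Finset.mem_univ, true_and]
      refine ⟨swap_mono hab p.1 p.2 hp.1 ?_, hp.2⟩
      rintro ⟨e1, e2⟩
      exact hne (Prod.ext e1 e2)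
    · intro q hq
      simp only [hA, Finset.mem_filter, Finset.mem_univ, true_and] at hq
      rw [Finset.mem_erase]
      constructor
      · rintro he
        have e1 : t q.1 = a := congrArg Prod.fst he
        have e2 : t q.2 = b := congrArg Prod.snd he
        have f1 : q.1 = b := by rw [← htt q.1, e1, htaa]
        have f2 : q.2 = a := by rw [← htt q.2, e2, htbb]
        have hq1 := hq.1
        rw [f1, f2, Fin.lt_def] at hq1
        rw [Fin.lt_def] at hab'
        omega
      · simp only [hA', Finset.mem_filter, Finset.mem_univ, true_and]
        refine ⟨swap_mono hab q.1 q.2 hq.1 ?_, ?_⟩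
        · rintro ⟨rfl, rfl⟩
          exact absurd hq.2 (not_lt.mpr (le_of_lt h))
        · show π (t (t q.2)) < π (t (t q.1))
          rw [htt, htt]; exact hq.2
    · intro p _; ext <;> simp [htt]
    · intro q _; ext <;> simp [htt]
  have : A'.card = A.card + 1 := by
    rw [← hcard, Finset.card_erase_of_mem hmem]
    have : 0 < A'.card := Finset.card_pos.mpr ⟨(a,b), hmem⟩
    omega
  simpa [inversions, hA', hA] using this


lemma erase_hb {S : Finset ℕ} (hb : ∀ i ∈ S, i + 3 ≤ n) (m : ℕ) :
    ∀ i ∈ S.erase m, i + 3 ≤ n := fun i hi => hb i (Finset.mem_of_mem_erase hi)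

lemma erase_hc {S : Finset ℕ} (hc : ∀ i ∈ S, i + 1 ∉ S) (m : ℕ) :
    ∀ i ∈ S.erase m, i + 1 ∉ S.erase m :=
  fun i hi h => hc i (Finset.mem_of_mem_erase hi) (Finset.mem_of_mem_erase h)

lemma sigma_empty : sigmaPerm (∅ : Finset ℕ) n = 1 := by
  apply Equiv.ext
  intro p
  apply Fin.ext
  show gclamp ∅ n p.val = p.val
  exact gclamp_untouched (Or.inr (Finset.notMem_empty _)) (Or.inr (Finset.notMem_empty _))

lemma sigma_min_decomp {S : Finset ℕ} (hb : ∀ i ∈ S, i + 3 ≤ n) (hc : ∀ i ∈ S, i + 1 ∉ S)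
    {m : ℕ} (hm : m ∈ S) (hmin : ∀ j ∈ S, m ≤ j) :
    sigmaPerm S n = sigmaPerm (S.erase m) n *
      Equiv.swap ⟨m+1, by have := hb m hm; omega⟩ ⟨m+2, by have := hb m hm; omega⟩ := by
  have hm3 := hb m hm
  have hb' := erase_hb hb m
  have hc' := erase_hc hc m
  apply Equiv.ext
  intro p
  apply Fin.ext
  rw [Equiv.Perm.mul_apply]
  by_cases e1 : (p : ℕ) = m + 1
  · have hp : p = ⟨m+1, by omega⟩ := Fin.ext e1
    rw [hp, Equiv.swap_apply_left, sigmaPerm_apply, sigmaPerm_apply]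
    show gclamp S n (m+1) = gclamp (S.erase m) n (m+2)
    rw [gclamp_at1 hb hc hm,
      gclamp_untouched (Or.inr (by simpa using fun h => hc m hm h))
        (Or.inr (by simp))]
  · by_cases e2 : (p : ℕ) = m + 2
    · have hp : p = ⟨m+2, by omega⟩ := Fin.ext e2
      rw [hp, Equiv.swap_apply_right, sigmaPerm_apply, sigmaPerm_apply]
      show gclamp S n (m+2) = gclamp (S.erase m) n (m+1)
      rw [gclamp_at2 hb hc hm]
      have h2 : m + 1 ≤ 1 ∨ m + 1 - 2 ∉ S.erase m := by
        rcases Nat.eq_zero_or_pos m with rfl | hmp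
        · left; omega
        · right; intro h
          exact absurd (hmin _ (Finset.mem_of_mem_erase h)) (by omega)
      rw [gclamp_untouched (Or.inr (by simp)) h2]
    · have hne1 : p ≠ ⟨m+1, by omega⟩ := fun h => e1 (by rw [h])
      have hne2 : p ≠ ⟨m+2, by omega⟩ := fun h => e2 (by rw [h])
      rw [Equiv.swap_apply_of_ne_of_ne hne1 hne2, sigmaPerm_apply, sigmaPerm_apply]
      show gclamp S n p.val = gclamp (S.erase m) n p.val
      by_cases f1 : (p : ℕ) ≠ 0 ∧ (p : ℕ) - 1 ∈ S
      · have hiS : (p : ℕ) - 1 ∈ S := f1.2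
        have hine : (p : ℕ) - 1 ≠ m := fun h => e1 (by omega)
        have hiE : (p : ℕ) - 1 ∈ S.erase m := Finset.mem_erase.mpr ⟨hine, hiS⟩
        have hpe : (p : ℕ) = ((p : ℕ) - 1) + 1 := by omega
        rw [hpe, gclamp_at1 hb hc hiS, gclamp_at1 hb' hc' hiE]
      · by_cases f2 : 2 ≤ (p : ℕ) ∧ (p : ℕ) - 2 ∈ S
        · have hiS : (p : ℕ) - 2 ∈ S := f2.2
          have hine : (p : ℕ) - 2 ≠ m := fun h => e2 (by omega)
          have hiE : (p : ℕ) - 2 ∈ S.erase m := Finset.mem_erase.mpr ⟨hine, hiS⟩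
          have hpe : (p : ℕ) = ((p : ℕ) - 2) + 2 := by omega
          rw [hpe, gclamp_at2 hb hc hiS, gclamp_at2 hb' hc' hiE]
        · have h1 : (p : ℕ) = 0 ∨ (p : ℕ) - 1 ∉ S := by tauto
          have h2 : (p : ℕ) ≤ 1 ∨ (p : ℕ) - 2 ∉ S := by
            rcases Nat.lt_or_ge (p : ℕ) 2 with h | h
            · left; omega
            · right; intro hh; exact f2 ⟨h, hh⟩
          rw [gclamp_untouched h1 h2,
            gclamp_untouched (h1.imp id (fun h hh => h (Finset.mem_of_mem_erase hh)))
              (h2.imp id (fun h hh => h (Finset.mem_of_mem_erase hh)))]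

section claims
variable {n : ℕ} (π : Equiv.Perm (Fin n)) (S : Finset ℕ)

/-- positions `≤ min S` are untouched by `sigmaPerm S` -/
lemma gclamp_below {S : Finset ℕ} {m r : ℕ} (hmin : ∀ j ∈ S, m ≤ j) (hr : r ≤ m) :
    gclamp S n r = r := by
  apply gclamp_untouched
  · rcases Nat.eq_zero_or_pos r with h | h
    · exact Or.inl h
    · right; intro hmem; exact absurd (hmin _ hmem) (by omega)
  · rcases Nat.lt_or_ge r 2 with h | h
    · exact Or.inl (by omega)
    · right; intro hmem; exact absurd (hmin _ hmem) (by omega)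

lemma inv_sigma :
    ∀ (S : Finset ℕ) (_ : ∀ i ∈ S, DR π i) (_ : ∀ i ∈ S, i + 1 ∉ S),
      inversions (π * sigmaPerm S n) = inversions π + S.card := by
  intro S
  induction S using Finset.strongInduction with
  | _ S ih =>
    intro hS1 hS2
    rcases S.eq_empty_or_nonempty with rfl | hne
    · simp [sigma_empty]
    · set m := S.min' hne with hmdef
      have hm : m ∈ S := S.min'_mem hne
      have hmin : ∀ j ∈ S, m ≤ j := fun j hj => S.min'_le j hj
      have hb : ∀ i ∈ S, i + 3 ≤ n := fun i hi => (hS1 i hi).1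
      have hm3 : m + 3 ≤ n := hb m hm
      have hDR := hS1 m hm
      rw [sigma_min_decomp hb hS2 hm hmin, ← mul_assoc]
      have hval : (π * sigmaPerm (S.erase m) n) ⟨m+1, by omega⟩ <
          (π * sigmaPerm (S.erase m) n) ⟨m+2, by omega⟩ := by
        have hmin' : ∀ j ∈ S.erase m, m ≤ j := fun j hj => hmin j (Finset.mem_of_mem_erase hj)
        have u1 : gclamp (S.erase m) n (m+1) = m+1 := by
          apply gclamp_untouched
          · right; intro h; exact Finset.notMem_erase m S (by simpa using h)
          · rcases Nat.eq_zero_or_pos m with h0 | h0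
            · left; omega
            · right; intro hmem; exact absurd (hmin' _ hmem) (by omega)
        have u2 : gclamp (S.erase m) n (m+2) = m+2 := by
          apply gclamp_untouched
          · right; intro hmem
            exact hS2 m hm (by simpa using Finset.mem_of_mem_erase hmem)
          · right; simp
        rw [Equiv.Perm.mul_apply, Equiv.Perm.mul_apply, sigmaPerm_apply, sigmaPerm_apply]
        simp only [u1, u2]
        rw [Fin.lt_def, pv_mk π (by omega : m + 1 < n), pv_mk π (by omega : m + 2 < n)]
        exact hDR.2.2
      rw [inversions_mul_swap _ (by simp) hval]
      rw [ih (S.erase m) (Finset.erase_ssubset hm) (fun i hi => hS1 i (Finset.mem_of_mem_erase hi))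
        (erase_hc hS2 m)]
      have : 0 < S.card := Finset.card_pos.mpr hne
      rw [Finset.card_erase_of_mem hm]
      omega

/-- Claim 1a : `v` has a 132 occurrence at `min S` -/
lemma claim1a (hS1 : ∀ i ∈ S, DR π i) (hS2 : ∀ i ∈ S, i + 1 ∉ S) (hne : S.Nonempty) :
    V (π * sigmaPerm S n) (S.min' hne) := by
  set m := S.min' hne with hmdef
  have hm : m ∈ S := S.min'_mem hne
  have hmin : ∀ j ∈ S, m ≤ j := fun j hj => S.min'_le j hj
  have hb : ∀ i ∈ S, i + 3 ≤ n := fun i hi => (hS1 i hi).1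
  have hm3 : m + 3 ≤ n := hb m hm
  have hDR := hS1 m hm
  have e0 : pv (π * sigmaPerm S n) m = pv π m := by
    rw [pv_sigma π S (by omega), gclamp_below hmin (by omega)]
  have e1 : pv (π * sigmaPerm S n) (m+1) = pv π (m+2) := by
    rw [pv_sigma π S (by omega), gclamp_at1 hb hS2 hm]
  have e2 : pv (π * sigmaPerm S n) (m+2) = pv π (m+1) := by
    rw [pv_sigma π S (by omega), gclamp_at2 hb hS2 hm]
  exact ⟨hm3, by rw [e0, e2]; exact hDR.2.1, by rw [e1, e2]; exact hDR.2.2⟩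

/-- Claim 1b : `v` has no 132 occurrence strictly before `min S` -/
lemma claim1b (hS1 : ∀ i ∈ S, DR π i) (hS2 : ∀ i ∈ S, i + 1 ∉ S)
    (hB : ∀ i, ¬ V π i) (hne : S.Nonempty) :
    ∀ p < S.min' hne, ¬ V (π * sigmaPerm S n) p := by
  set m := S.min' hne with hmdef
  have hm : m ∈ S := S.min'_mem hne
  have hmin : ∀ j ∈ S, m ≤ j := fun j hj => S.min'_le j hj
  have hb : ∀ i ∈ S, i + 3 ≤ n := fun i hi => (hS1 i hi).1
  have hm3 : m + 3 ≤ n := hb m hm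
  have hDR := hS1 m hm
  intro p hp hV
  obtain ⟨hpn, hv1, hv2⟩ := hV
  have e0 : pv (π * sigmaPerm S n) p = pv π p := by
    rw [pv_sigma π S (by omega), gclamp_below hmin (by omega)]
  have e1 : pv (π * sigmaPerm S n) (p+1) = pv π (p+1) := by
    rw [pv_sigma π S (by omega), gclamp_below hmin (by omega)]
  rcases Nat.lt_or_ge p (m-1) with hcase | hcase
  · -- window untouched
    have e2 : pv (π * sigmaPerm S n) (p+2) = pv π (p+2) := by
      rw [pv_sigma π S (by omega), gclamp_below hmin (by omega)]
    rw [e0] at hv1; rw [e1] at hv2; rw [e2] at hv1 hv2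
    exact hB p ⟨hpn, hv1, hv2⟩
  · -- p = m - 1, p + 2 = m + 1
    have hpm : p = m - 1 ∧ 1 ≤ m := by omega
    have hp2 : p + 2 = m + 1 := by omega
    have e2 : pv (π * sigmaPerm S n) (p+2) = pv π (m+2) := by
      rw [hp2, pv_sigma π S (by omega), gclamp_at1 hb hS2 hm]
    rw [e0] at hv1; rw [e1] at hv2; rw [e2] at hv1 hv2
    have hp1 : p + 1 = m := by omega
    rw [hp1] at hv2
    exact absurd hv2 (not_lt.mpr (le_of_lt (lt_trans hDR.2.1 hDR.2.2)))

/-- injectivity of `(π, S) ↦ π * σ_S` on valid pairs -/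
lemma sigma_inj : ∀ (k : ℕ) (π π' : Equiv.Perm (Fin n)) (S S' : Finset ℕ),
    S.card ≤ k →
    (∀ i ∈ S, DR π i) → (∀ i ∈ S, i + 1 ∉ S) → (∀ i, ¬ V π i) →
    (∀ i ∈ S', DR π' i) → (∀ i ∈ S', i + 1 ∉ S') → (∀ i, ¬ V π' i) →
    π * sigmaPerm S n = π' * sigmaPerm S' n → π = π' ∧ S = S' := by
  intro k
  induction k with
  | zero =>
    intro π π' S S' hcard hS1 hS2 hBπ hS1' hS2' hBπ' heq
    have hSe : S = ∅ := Finset.card_eq_zero.mp (by omega)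
    subst hSe
    rcases S'.eq_empty_or_nonempty with rfl | hne'
    · refine ⟨?_, rfl⟩
      rwa [sigma_empty, mul_one, mul_one] at heq
    · exfalso
      have h1 := claim1a π' S' hS1' hS2' hne'
      rw [← heq] at h1
      rw [sigma_empty, mul_one] at h1
      exact hBπ _ h1
  | succ k ih =>
    intro π π' S S' hcard hS1 hS2 hBπ hS1' hS2' hBπ' heq
    rcases S.eq_empty_or_nonempty with rfl | hne
    · rcases S'.eq_empty_or_nonempty with rfl | hne'
      · refine ⟨?_, rfl⟩
        rwa [sigma_empty, mul_one, mul_one] at heq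
      · exfalso
        have h1 := claim1a π' S' hS1' hS2' hne'
        rw [← heq, sigma_empty, mul_one] at h1
        exact hBπ _ h1
    · rcases S'.eq_empty_or_nonempty with rfl | hne'
      · exfalso
        have h1 := claim1a π S hS1 hS2 hne
        rw [heq, sigma_empty, mul_one] at h1
        exact hBπ' _ h1
      · set m := S.min' hne with hmdef
        set m' := S'.min' hne' with hmdef'
        have hmm : m = m' := by
          by_contra hne2
          rcases Nat.lt_or_ge m m' with h | h
          · exact claim1b π' S' hS1' hS2' hBπ' hne' m h
              (heq ▸ claim1a π S hS1 hS2 hne)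
          · exact claim1b π S hS1 hS2 hBπ hne m' (by omega)
              (heq.symm ▸ claim1a π' S' hS1' hS2' hne')
        have hm : m ∈ S := S.min'_mem hne
        have hm'2 : m ∈ S' := by rw [hmm]; exact S'.min'_mem hne'
        have hmin : ∀ j ∈ S, m ≤ j := fun j hj => S.min'_le j hj
        have hmin'2 : ∀ j ∈ S', m ≤ j := fun j hj => by rw [hmm]; exact S'.min'_le j hj
        have hb : ∀ i ∈ S, i + 3 ≤ n := fun i hi => (hS1 i hi).1
        have hb' : ∀ i ∈ S', i + 3 ≤ n := fun i hi => (hS1' i hi).1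
        have hm3 : m + 3 ≤ n := hb m hm
        rw [sigma_min_decomp hb hS2 hm hmin, sigma_min_decomp hb' hS2' hm'2 hmin'2] at heq
        rw [← mul_assoc, ← mul_assoc] at heq
        have heq2 : π * sigmaPerm (S.erase m) n = π' * sigmaPerm (S'.erase m) n :=
          mul_right_cancel heq
        have hrec := ih π π' (S.erase m) (S'.erase m)
          (by rw [Finset.card_erase_of_mem hm]
              have : 0 < S.card := Finset.card_pos.mpr hne
              omega)
          (fun i hi => hS1 i (Finset.mem_of_mem_erase hi)) (erase_hc hS2 m) hBπ
          (fun i hi => hS1' i (Finset.mem_of_mem_erase hi)) (erase_hc hS2' m) hBπ' heq2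
        refine ⟨hrec.1, ?_⟩
        rw [← Finset.insert_erase hm, hrec.2, Finset.insert_erase hm'2]
end claims

section greedy
variable {n : ℕ}

instance (π : Equiv.Perm (Fin n)) (i : ℕ) : Decidable (DR π i) := by
  unfold DR; infer_instance

/-- greedy scan: pick `i` when `123` occurs at `i` and `i-1` was not picked -/
def grb (π : Equiv.Perm (Fin n)) : ℕ → Bool
  | 0 => decide (DR π 0)
  | (i+1) => decide (DR π (i+1)) && !(grb π i)

def Sgreedy (π : Equiv.Perm (Fin n)) : Finset ℕ :=
  (Finset.range n).filter (fun i => grb π i = true)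

lemma grb_DR {π : Equiv.Perm (Fin n)} {i : ℕ} (h : grb π i = true) : DR π i := by
  cases i with
  | zero => exact of_decide_eq_true h
  | succ j =>
    rw [grb, Bool.and_eq_true] at h
    exact of_decide_eq_true h.1

lemma mem_Sgreedy {π : Equiv.Perm (Fin n)} {i : ℕ} :
    i ∈ Sgreedy π ↔ grb π i = true := by
  constructor
  · intro h; exact (Finset.mem_filter.mp h).2
  · intro h
    refine Finset.mem_filter.mpr ⟨Finset.mem_range.mpr ?_, h⟩
    have := (grb_DR h).1; omega

lemma Sg_hS1 (π : Equiv.Perm (Fin n)) : ∀ i ∈ Sgreedy π, DR π i :=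
  fun _ hi => grb_DR (mem_Sgreedy.mp hi)

lemma Sg_hS2 (π : Equiv.Perm (Fin n)) : ∀ i ∈ Sgreedy π, i + 1 ∉ Sgreedy π := by
  intro i hi h1
  have hgi := mem_Sgreedy.mp hi
  have hgi1 := mem_Sgreedy.mp h1
  rw [grb, Bool.and_eq_true, hgi] at hgi1
  simp at hgi1

lemma Sg_G1 {π : Equiv.Perm (Fin n)} {p : ℕ} (h : DR π p) :
    p ∈ Sgreedy π ∨ (1 ≤ p ∧ p - 1 ∈ Sgreedy π) := by
  cases p with
  | zero =>
    left
    exact mem_Sgreedy.mpr (by rw [grb]; exact decide_eq_true h)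
  | succ j =>
    by_cases hj : grb π j = true
    · right
      exact ⟨by omega, by simpa using mem_Sgreedy.mpr hj⟩
    · left
      apply mem_Sgreedy.mpr
      rw [grb, Bool.and_eq_true]
      exact ⟨decide_eq_true h, by simp [Bool.not_eq_true'] at hj ⊢; exact hj⟩

lemma pv_inj {π : Equiv.Perm (Fin n)} {i j : ℕ} (hi : i < n) (hj : j < n)
    (h : pv π i = pv π j) : i = j := by
  simp only [pv, dif_pos hi, dif_pos hj] at h
  exact Fin.mk.inj_iff.mp (π.injective (Fin.val_injective h))

/-- Claim 2: the image of the greedy map has no 123 occurrence -/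
lemma claim2 (π : Equiv.Perm (Fin n)) (hB : ∀ i, ¬ V π i) :
    ∀ p, ¬ DR (π * sigmaPerm (Sgreedy π) n) p := by
  intro p hDRv
  obtain ⟨hpn, h1, h2⟩ := hDRv
  set S := Sgreedy π with hSdef
  have hS1 := Sg_hS1 π
  have hS2 := Sg_hS2 π
  have hb : ∀ i ∈ S, i + 3 ≤ n := fun i hi => (hS1 i hi).1
  -- pv computations for the three window entries
  by_cases c1 : 1 ≤ p ∧ p - 1 ∈ S
  · -- v_p = π_{p+1}, v_{p+1} = π_p ; contradicts DR π (p-1)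
    have hD := hS1 _ c1.2
    have hp : p = (p - 1) + 1 := by omega
    have e0 : pv (π * sigmaPerm S n) p = pv π (p + 1) := by
      rw [pv_sigma π S (by omega), hp, gclamp_at1 hb hS2 c1.2]
      all_goals (congr 1 <;> omega)
    have e1 : pv (π * sigmaPerm S n) (p + 1) = pv π p := by
      rw [pv_sigma π S (by omega), show p + 1 = (p - 1) + 2 by omega,
        gclamp_at2 hb hS2 c1.2]
      all_goals (congr 1 <;> omega)
    rw [e0, e1] at h1
    have := hD.2.2
    rw [show (p - 1) + 1 = p by omega, show (p - 1) + 2 = p + 1 by omega] at this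
    omega
  · by_cases c0 : p ∈ S
    · -- v_{p+1} = π_{p+2}, v_{p+2} = π_{p+1} ; contradicts DR π p
      have hD := hS1 _ c0
      have e1 : pv (π * sigmaPerm S n) (p + 1) = pv π (p + 2) := by
        rw [pv_sigma π S (by omega), gclamp_at1 hb hS2 c0]
      have e2 : pv (π * sigmaPerm S n) (p + 2) = pv π (p + 1) := by
        rw [pv_sigma π S (by omega), gclamp_at2 hb hS2 c0]
      rw [e1, e2] at h2
      have := hD.2.2
      omega
    · -- ¬c0, ¬c1 : v_{p+1} = π_{p+1}
      have e1 : pv (π * sigmaPerm S n) (p + 1) = pv π (p + 1) := by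
        rw [pv_sigma π S (by omega), gclamp_untouched (Or.inr (by simpa using c0))
          (by
            rcases Nat.lt_or_ge (p+1) 2 with h | h
            · exact Or.inl (by omega)
            · right; intro hmem; exact c1 ⟨by omega, by simpa [show p + 1 - 2 = p - 1 by omega] using hmem⟩)]
      by_cases cp1 : p + 1 ∈ S
      · -- v_{p+2} = π_{p+3} and DR π (p+1)
        have hD1 := hS1 _ cp1
        have hb1 : p + 1 + 3 ≤ n := hD1.1
        have e2 : pv (π * sigmaPerm S n) (p + 2) = pv π (p + 3) := by
          rw [pv_sigma π S (by omega), show p + 2 = (p + 1) + 1 by omega,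
            gclamp_at1 hb hS2 cp1]
        rw [e1] at h1 h2
        rw [e2] at h2
        have hD1a := hD1.2.1
        have hD1b := hD1.2.2
        rw [show p + 1 + 1 = p + 2 by omega] at hD1a hD1b
        rw [show p + 1 + 2 = p + 3 by omega] at hD1b
        by_cases c2 : 2 ≤ p ∧ p - 2 ∈ S
        · -- v_p = π_{p-1}
          have hD2 := hS1 _ c2.2
          have e0 : pv (π * sigmaPerm S n) p = pv π (p - 1) := by
            rw [pv_sigma π S (by omega), show p = (p - 2) + 2 by omega,
              gclamp_at2 hb hS2 c2.2]
            all_goals (congr 1 <;> omega)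
          rw [e0] at h1
          by_cases hsub : pv π p < pv π (p + 1)
          · -- DR π p, greedy contradiction
            rcases Sg_G1 ⟨hpn, hsub, hD1a⟩ with h | h
            · exact c0 h
            · exact c1 h
          · -- V π (p-1)
            have hne : pv π (p + 1) ≠ pv π p :=
              fun hh => by have := pv_inj (by omega) (by omega) hh; omega
            apply hB (p - 1)
            refine ⟨by omega, ?_, ?_⟩
            · rw [show p - 1 + 2 = p + 1 by omega]; exact h1
            · rw [show p - 1 + 2 = p + 1 by omega, show p - 1 + 1 = p by omega]
              omega
        · -- v_p = π_p
          have e0 : pv (π * sigmaPerm S n) p = pv π p := by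
            rw [pv_sigma π S (by omega), gclamp_untouched
              (by
                rcases Nat.eq_zero_or_pos p with h | h
                · exact Or.inl h
                · right; intro hmem; exact c1 ⟨by omega, hmem⟩)
              (by
                rcases Nat.lt_or_ge p 2 with h | h
                · exact Or.inl (by omega)
                · right; intro hmem; exact c2 ⟨h, hmem⟩)]
          rw [e0] at h1
          rcases Sg_G1 ⟨hpn, h1, hD1a⟩ with h | h
          · exact c0 h
          · exact c1 h
      · -- v_{p+2} = π_{p+2}
        have e2 : pv (π * sigmaPerm S n) (p + 2) = pv π (p + 2) := by
          rw [pv_sigma π S (by omega), gclamp_untouched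
            (Or.inr (by simpa [show p + 2 - 1 = p + 1 by omega] using cp1))
            (Or.inr (by simpa [show p + 2 - 2 = p by omega] using c0))]
        rw [e1] at h1 h2
        rw [e2] at h2
        by_cases c2 : 2 ≤ p ∧ p - 2 ∈ S
        · -- v_p = π_{p-1}
          have hD2 := hS1 _ c2.2
          have e0 : pv (π * sigmaPerm S n) p = pv π (p - 1) := by
            rw [pv_sigma π S (by omega), show p = (p - 2) + 2 by omega,
              gclamp_at2 hb hS2 c2.2]
            all_goals (congr 1 <;> omega)
          rw [e0] at h1
          by_cases hsub : pv π p < pv π (p + 1)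
          · rcases Sg_G1 ⟨hpn, hsub, h2⟩ with h | h
            · exact c0 h
            · exact c1 h
          · have hne : pv π (p + 1) ≠ pv π p :=
              fun hh => by have := pv_inj (by omega) (by omega) hh; omega
            apply hB (p - 1)
            refine ⟨by omega, ?_, ?_⟩
            · rw [show p - 1 + 2 = p + 1 by omega]; exact h1
            · rw [show p - 1 + 2 = p + 1 by omega, show p - 1 + 1 = p by omega]
              omega
        · -- all untouched : DR π p, greedy contradiction
          have e0 : pv (π * sigmaPerm S n) p = pv π p := by
            rw [pv_sigma π S (by omega), gclamp_untouched
              (by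
                rcases Nat.eq_zero_or_pos p with h | h
                · exact Or.inl h
                · right; intro hmem; exact c1 ⟨by omega, hmem⟩)
              (by
                rcases Nat.lt_or_ge p 2 with h | h
                · exact Or.inl (by omega)
                · right; intro hmem; exact c2 ⟨h, hmem⟩)]
          rw [e0] at h1
          rcases Sg_G1 ⟨hpn, h1, h2⟩ with h | h
          · exact c0 h
          · exact c1 h
end greedy

section final
variable {n : ℕ}

lemma avoids_refl_iff (π : Equiv.Perm (Fin n)) :
    avoids (Equiv.refl (Fin 3)) π ↔ ∀ i, ¬ DR π i := by
  unfold avoids; simp only [occursAt_refl_iff]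

lemma avoids_swap_iff (π : Equiv.Perm (Fin n)) :
    avoids (Equiv.swap (1 : Fin 3) 2) π ↔ ∀ i, ¬ V π i := by
  unfold avoids; simp only [occursAt_swap_iff]

/-- the injection from 132-avoiders to 123-avoiders -/
noncomputable def Phi (π : Equiv.Perm (Fin n)) : Equiv.Perm (Fin n) :=
  π * sigmaPerm (Sgreedy π) n

lemma inv_Phi (π : Equiv.Perm (Fin n)) :
    inversions (Phi π) = inversions π + (Sgreedy π).card :=
  inv_sigma π (Sgreedy π) (Sg_hS1 π) (Sg_hS2 π)

set_option maxHeartbeats 2000000 in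
lemma key_sum_ineq (q : ℝ) (hq : 1 ≤ q) :
    (∑ π ∈ Finset.univ.filter
        (fun π : Equiv.Perm (Fin n) => avoids (Equiv.swap (1 : Fin 3) 2) π),
      q ^ inversions π)
      ≤ ∑ π ∈ Finset.univ.filter
          (fun π : Equiv.Perm (Fin n) => avoids (Equiv.refl (Fin 3)) π),
        q ^ inversions π := by
  classical
  have hq0 : (0:ℝ) ≤ q := le_trans zero_le_one hq
  set B := Finset.univ.filter
    (fun π : Equiv.Perm (Fin n) => avoids (Equiv.swap (1 : Fin 3) 2) π) with hBdef
  set A := Finset.univ.filter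
    (fun π : Equiv.Perm (Fin n) => avoids (Equiv.refl (Fin 3)) π) with hAdef
  have hmemB : ∀ π ∈ B, ∀ i, ¬ V π i := by
    intro π hπ
    exact (avoids_swap_iff π).mp (Finset.mem_filter.mp hπ).2
  have step1 : (∑ π ∈ B, q ^ inversions π) ≤ ∑ π ∈ B, q ^ inversions (Phi π) := by
    apply Finset.sum_le_sum
    intro π hπ
    apply pow_le_pow_right₀ hq
    rw [inv_Phi]
    omega
  have hinj : ∀ π ∈ B, ∀ π' ∈ B, Phi π = Phi π' → π = π' := by
    intro π hπ π' hπ' heq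
    exact (sigma_inj (Sgreedy π).card π π' (Sgreedy π) (Sgreedy π') le_rfl
      (Sg_hS1 π) (Sg_hS2 π) (hmemB π hπ)
      (Sg_hS1 π') (Sg_hS2 π') (hmemB π' hπ') heq).1
  have step2 : (∑ π ∈ B, q ^ inversions (Phi π)) = ∑ τ ∈ B.image Phi, q ^ inversions τ := by
    rw [Finset.sum_image hinj]
  have hsub : B.image Phi ⊆ A := by
    intro τ hτ
    obtain ⟨π, hπ, rfl⟩ := Finset.mem_image.mp hτ
    refine Finset.mem_filter.mpr ⟨Finset.mem_univ _, ?_⟩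
    exact (avoids_refl_iff _).mpr (claim2 π (hmemB π hπ))
  have step3 : (∑ τ ∈ B.image Phi, q ^ inversions τ) ≤ ∑ τ ∈ A, q ^ inversions τ :=
    Finset.sum_le_sum_of_subset_of_nonneg hsub (fun τ _ _ => pow_nonneg hq0 _)
  calc (∑ π ∈ B, q ^ inversions π) ≤ _ := step1
    _ = _ := step2
    _ ≤ _ := step3

end final
end CP

/-- for `q ≥ 1` and every `n ≥ 1`, `P_n(132, q) ≤ P_n(123, q)`;
equivalently, `∑_{π ∈ S_n(132)} q^{inv π} ≤ ∑_{π ∈ S_n(123)} q^{inv π}`.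
Here `132` is the permutation `Equiv.swap 1 2` of `Fin 3` and `123` is the identity. -/
theorem Pn_132_le_Pn_123 (n : ℕ) (hn : 1 ≤ n) (q : ℝ) (hq : 1 ≤ q) :
    Pn 3 (Equiv.swap (1 : Fin 3) 2) q n ≤ Pn 3 (Equiv.refl (Fin 3)) q n ∧
    (∑ π ∈ Finset.univ.filter
        (fun π : Equiv.Perm (Fin n) => avoids (Equiv.swap (1 : Fin 3) 2) π),
      q ^ inversions π)
      ≤ ∑ π ∈ Finset.univ.filter
          (fun π : Equiv.Perm (Fin n) => avoids (Equiv.refl (Fin 3)) π),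
        q ^ inversions π := by
  have key := CP.key_sum_ineq (n := n) q hq
  have hfact : 0 < qfact q n := by
    apply Finset.prod_pos
    intro i _
    apply Finset.sum_pos
    · intro j _
      exact pow_pos (lt_of_lt_of_le zero_lt_one hq) j
    · exact ⟨0, Finset.mem_range.mpr (by omega)⟩
  refine ⟨?_, key⟩
  unfold Pn
  exact (div_le_div_iff_of_pos_right hfact).mpr key
end

section
/- For the Mallows(q) distribution on S_n with q > 0 and m ≥ 1, let x_j be the indicator that the pattern σ ∈ S_m occurs at position j (i.e., st(π_j...π_{j+m−1}) = σ). If |i − j| ≥ m, then x_i and x_j are independent: P(x_i = 1 and x_j = 1) = P(x_i = 1)·P(x_j = 1). -/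
/-!
Right-multiplying `π` by the permutation that acts as `τ` on the positions of a window of length
`m` and fixes all other positions turns the pattern `ρ` of that window into `ρ * τ`, leaves every
disjoint window untouched and, when the window of `π` is increasing, adds exactly `inv τ`
inversions. Hence the Mallows weight of "pattern `σ` at `j`" is `q ^ inv σ` times the weight of
"increasing at `j`", and for disjoint windows the two twists act independently. Summing over all
patterns of a window gives `∑ π, q ^ inv π = [m]_q! * (weight of "increasing at j")`; the case of
the window `[1, n)` yields `∑ π, q ^ inv π = [n]_q!` by induction, and the product formula is
then bookkeeping.
-/

open scoped Classical

open Finset Equiv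

section Windows

variable {m n : ℕ}

def windowEmb (j : ℕ) (h : j + m ≤ n) : Fin m ↪o Fin n :=
  OrderEmbedding.ofStrictMono (fun a => ⟨j + a, by omega⟩) fun _ _ hab =>
    Nat.add_lt_add_left (Fin.lt_def.1 hab) j

@[simp]
lemma coe_windowEmb {j : ℕ} (h : j + m ≤ n) (a : Fin m) : (windowEmb j h a : ℕ) = j + a :=
  rfl

lemma mem_range_windowEmb {j : ℕ} (h : j + m ≤ n) {k : Fin n} :
    k ∈ Set.range (windowEmb j h) ↔ j ≤ k ∧ k < j + m := by
  constructor
  · rintro ⟨a, rfl⟩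
    simp
  · rintro ⟨hjk, hkm⟩
    exact ⟨⟨k - j, by omega⟩, Fin.ext (by simp; omega)⟩

lemma occursAt_iff {σ : Perm (Fin m)} {π : Perm (Fin n)} {j : ℕ} (h : j + m ≤ n) :
    occursAt σ π j ↔ ∀ a b, σ a < σ b ↔ π (windowEmb j h a) < π (windowEmb j h b) :=
  ⟨fun ⟨_, H⟩ => H, fun H => ⟨h, H⟩⟩

lemma Equiv.Perm.eq_of_lt_iff_lt {μ ν : Perm (Fin m)} (h : ∀ a b, μ a < μ b ↔ ν a < ν b) :
    μ = ν := by
  have hmono : StrictMono (μ ∘ ν.symm) := fun a b hab => by simpa [h] using hab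
  have hid : μ ∘ ν.symm = id := hmono.range_inj strictMono_id |>.1 <| by
    simp [(μ.surjective.comp ν.symm.surjective).range_eq]
  exact Equiv.ext fun b => by simpa using congrFun hid (ν b)

-- The standardization `st(π_j ⋯ π_{j+m-1})`: the inverse of the permutation sorting the window.
noncomputable def windowPattern (j : ℕ) (h : j + m ≤ n) (π : Perm (Fin n)) : Perm (Fin m) :=
  (Tuple.sort (π ∘ windowEmb j h))⁻¹

lemma occursAt_windowPattern {j : ℕ} (h : j + m ≤ n) (π : Perm (Fin n)) :
    occursAt (windowPattern j h π) π j := by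
  set f := π ∘ windowEmb j h
  have hsorted : StrictMono (f ∘ Tuple.sort f) :=
    (Tuple.monotone_sort f).strictMono_of_injective
      ((π.injective.comp (windowEmb j h).injective).comp (Tuple.sort f).injective)
  refine (occursAt_iff h).2 fun a b => ?_
  have := hsorted.lt_iff_lt (a := (Tuple.sort f)⁻¹ a) (b := (Tuple.sort f)⁻¹ b)
  simpa [f, windowPattern, Perm.inv_def] using this.symm

lemma occursAt_iff_windowPattern_eq {σ : Perm (Fin m)} {π : Perm (Fin n)} {j : ℕ}
    (h : j + m ≤ n) : occursAt σ π j ↔ windowPattern j h π = σ := by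
  refine ⟨fun hσ => Perm.eq_of_lt_iff_lt fun a b => ?_, fun hσ => hσ ▸ occursAt_windowPattern h π⟩
  rw [(occursAt_iff h).1 (occursAt_windowPattern h π), (occursAt_iff h).1 hσ]

lemma sum_eq_sum_sum_filter_occursAt {β : Type*} [AddCommMonoid β] {j : ℕ} (h : j + m ≤ n)
    (s : Finset (Perm (Fin n))) (g : Perm (Fin n) → β) :
    ∑ π ∈ s, g π = ∑ τ : Perm (Fin m), ∑ π ∈ s with occursAt τ π j, g π := by
  rw [← sum_fiberwise s (windowPattern j h) g]
  simp only [occursAt_iff_windowPattern_eq h]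

end Windows

section WindowPerm

variable {m n : ℕ}

noncomputable def windowPerm (j : ℕ) (h : j + m ≤ n) : Perm (Fin m) →* Perm (Fin n) :=
  Perm.viaEmbeddingHom (windowEmb j h).toEmbedding

variable {j : ℕ} (h : j + m ≤ n) (τ : Perm (Fin m))

@[simp]
lemma windowPerm_apply_windowEmb (a : Fin m) :
    windowPerm j h τ (windowEmb j h a) = windowEmb j h (τ a) :=
  Perm.viaEmbedding_apply τ _ a

lemma windowPerm_apply_of_notMem {k : Fin n} (hk : k ∉ Set.range (windowEmb j h)) :
    windowPerm j h τ k = k :=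
  Perm.viaEmbedding_apply_of_notMem τ _ k hk

lemma windowPerm_apply_mem_range_iff {k : Fin n} :
    windowPerm j h τ k ∈ Set.range (windowEmb j h) ↔ k ∈ Set.range (windowEmb j h) := by
  by_cases hk : k ∈ Set.range (windowEmb j h)
  · obtain ⟨a, rfl⟩ := hk
    simp
  · rw [windowPerm_apply_of_notMem h τ hk]

lemma windowPerm_lt_windowPerm {k l : Fin n} (hkl : k < l)
    (hout : ¬(k ∈ Set.range (windowEmb j h) ∧ l ∈ Set.range (windowEmb j h))) :
    windowPerm j h τ k < windowPerm j h τ l := by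
  by_cases hk : k ∈ Set.range (windowEmb j h)
  · have hl : l ∉ Set.range (windowEmb j h) := fun hl => hout ⟨hk, hl⟩
    have hk' := (mem_range_windowEmb h).1 ((windowPerm_apply_mem_range_iff h τ).2 hk)
    rw [windowPerm_apply_of_notMem h τ hl]
    rw [mem_range_windowEmb] at hk hl
    rw [Fin.lt_def] at hkl ⊢
    omega
  · rw [windowPerm_apply_of_notMem h τ hk]
    by_cases hl : l ∈ Set.range (windowEmb j h)
    · have hl' := (mem_range_windowEmb h).1 ((windowPerm_apply_mem_range_iff h τ).2 hl)
      rw [mem_range_windowEmb] at hk hl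
      rw [Fin.lt_def] at hkl ⊢
      omega
    · rwa [windowPerm_apply_of_notMem h τ hl]

lemma occursAt_mul_windowPerm_iff {σ : Perm (Fin m)} {π : Perm (Fin n)} :
    occursAt (σ * τ) (π * windowPerm j h τ) j ↔ occursAt σ π j := by
  simp only [occursAt_iff h, Perm.mul_apply, windowPerm_apply_windowEmb]
  exact ⟨fun H a b => by simpa using H (τ⁻¹ a) (τ⁻¹ b), fun H a b => H (τ a) (τ b)⟩

lemma occursAt_mul_windowPerm_of_disjoint {m' i : ℕ} {σ : Perm (Fin m')} {π : Perm (Fin n)}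
    (hd : i + m' ≤ j ∨ j + m ≤ i) :
    occursAt σ (π * windowPerm j h τ) i ↔ occursAt σ π i := by
  have hfix (c : Fin m') (hc : i + c < n) : windowPerm j h τ ⟨i + c, hc⟩ = ⟨i + c, hc⟩ :=
    windowPerm_apply_of_notMem h τ (by rw [mem_range_windowEmb]; have := c.isLt; simp only; omega)
  constructor <;> rintro ⟨hi, H⟩ <;> exact ⟨hi, fun a b => by simpa [hfix] using H a b⟩

end WindowPerm

section Inversions

variable {m n : ℕ}

def inversionSet (π : Perm (Fin n)) : Finset (Fin n × Fin n) :=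
  univ.filter fun p => p.1 < p.2 ∧ π p.2 < π p.1

@[simp]
lemma mem_inversionSet {π : Perm (Fin n)} {p : Fin n × Fin n} :
    p ∈ inversionSet π ↔ p.1 < p.2 ∧ π p.2 < π p.1 := by
  simp [inversionSet]

lemma inversions_eq_card_inversionSet (π : Perm (Fin n)) : inversions π = #(inversionSet π) :=
  rfl

@[simp]
lemma inversions_one : inversions (1 : Perm (Fin n)) = 0 := by
  simp only [inversions_eq_card_inversionSet, card_eq_zero, eq_empty_iff_forall_notMem,
    mem_inversionSet, Perm.one_apply]
  exact fun p ⟨hlt, hgt⟩ => hlt.asymm hgt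

def windowPairs (j : ℕ) (h : j + m ≤ n) : Set (Fin n × Fin n) :=
  Set.range (windowEmb j h) ×ˢ Set.range (windowEmb j h)

variable {j : ℕ} (h : j + m ≤ n) (τ : Perm (Fin m))

lemma prodMap_windowPerm_mem_windowPairs_iff {p : Fin n × Fin n} :
    Prod.map (windowPerm j h τ) (windowPerm j h τ) p ∈ windowPairs j h ↔ p ∈ windowPairs j h := by
  simp only [windowPairs, Set.mem_prod, Prod.map_fst, Prod.map_snd, windowPerm_apply_mem_range_iff]

lemma prodMap_windowPerm_mem_inversionSet (π : Perm (Fin n)) {p : Fin n × Fin n}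
    (hp : p ∈ inversionSet (π * windowPerm j h τ)) (hpW : p ∉ windowPairs j h) :
    Prod.map (windowPerm j h τ) (windowPerm j h τ) p ∈ inversionSet π := by
  rw [mem_inversionSet] at hp ⊢
  exact ⟨windowPerm_lt_windowPerm h τ hp.1 hpW, hp.2⟩

lemma card_inversionSet_mul_windowPerm_filter_notMem (π : Perm (Fin n)) :
    #{p ∈ inversionSet (π * windowPerm j h τ) | p ∉ windowPairs j h}
      = #{p ∈ inversionSet π | p ∉ windowPairs j h} := by
  have hπ : π * windowPerm j h τ * windowPerm j h τ⁻¹ = π := by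
    rw [mul_assoc, ← map_mul, mul_inv_cancel, map_one, mul_one]
  refine card_nbij' (Prod.map (windowPerm j h τ) (windowPerm j h τ))
    (Prod.map (windowPerm j h τ⁻¹) (windowPerm j h τ⁻¹)) (fun p hp => ?_) (fun p hp => ?_)
    (fun p _ => Prod.ext (by simp) (by simp)) (fun p _ => Prod.ext (by simp) (by simp))
  · simp only [coe_filter, Set.mem_ofPred_eq] at hp ⊢
    exact ⟨prodMap_windowPerm_mem_inversionSet h τ π hp.1 hp.2,
      (prodMap_windowPerm_mem_windowPairs_iff h τ).not.2 hp.2⟩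
  · simp only [coe_filter, Set.mem_ofPred_eq] at hp ⊢
    exact ⟨prodMap_windowPerm_mem_inversionSet h τ⁻¹ _ (hπ.symm ▸ hp.1) hp.2,
      (prodMap_windowPerm_mem_windowPairs_iff h τ⁻¹).not.2 hp.2⟩

lemma card_inversionSet_mul_windowPerm_filter_mem {π : Perm (Fin n)}
    (hπ : occursAt (1 : Perm (Fin m)) π j) :
    #{p ∈ inversionSet (π * windowPerm j h τ) | p ∈ windowPairs j h} = inversions τ := by
  have hsorted (a b : Fin m) : π (windowEmb j h a) < π (windowEmb j h b) ↔ a < b :=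
    ((occursAt_iff h).1 hπ a b).symm
  have he := (windowEmb j h).injective
  rw [inversions_eq_card_inversionSet, eq_comm]
  refine card_nbij (Prod.map (windowEmb j h) (windowEmb j h)) (fun p hp => ?_)
    (he.prodMap he).injOn (fun p hp => ?_)
  · simp only [coe_filter, Set.mem_ofPred_eq, mem_coe, mem_inversionSet] at hp ⊢
    simpa [windowPairs, hsorted] using hp
  · simp only [coe_filter, Set.mem_ofPred_eq, mem_inversionSet, windowPairs, Set.mem_prod] at hp
    obtain ⟨⟨hlt, hinv⟩, ⟨a, ha⟩, ⟨b, hb⟩⟩ := hp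
    obtain ⟨p1, p2⟩ := p
    subst ha hb
    refine ⟨(a, b), ?_, rfl⟩
    simp only [Perm.mul_apply, windowPerm_apply_windowEmb, hsorted] at hlt hinv
    simpa using ⟨(windowEmb j h).lt_iff_lt.1 hlt, hinv⟩

lemma inversions_mul_windowPerm {π : Perm (Fin n)} (hπ : occursAt (1 : Perm (Fin m)) π j) :
    inversions (π * windowPerm j h τ) = inversions π + inversions τ := by
  -- the case `τ = 1`: the increasing window of `π` contains no inversion
  have hπW : #{p ∈ inversionSet π | p ∈ windowPairs j h} = 0 := by
    simpa using card_inversionSet_mul_windowPerm_filter_mem h 1 hπ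
  rw [inversions_eq_card_inversionSet, inversions_eq_card_inversionSet,
    ← card_filter_add_card_filter_not (· ∈ windowPairs j h),
    ← card_filter_add_card_filter_not (s := inversionSet π) (· ∈ windowPairs j h),
    card_inversionSet_mul_windowPerm_filter_mem h τ hπ,
    card_inversionSet_mul_windowPerm_filter_notMem h τ π, hπW]
  omega

end Inversions

section Sums

variable {m n : ℕ} (q : ℝ) {j : ℕ} (h : j + m ≤ n) {s : Finset (Perm (Fin n))}

lemma sum_filter_occursAt_eq_pow_mul
    (hs : ∀ π τ, π * windowPerm j h τ ∈ s ↔ π ∈ s) (σ : Perm (Fin m)) :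
    ∑ π ∈ s with occursAt σ π j, q ^ inversions π
      = q ^ inversions σ * ∑ π ∈ s with occursAt (1 : Perm (Fin m)) π j, q ^ inversions π := by
  have hσ : σ * σ⁻¹ = 1 := mul_inv_cancel σ
  rw [mul_sum]
  symm
  refine sum_nbij' (· * windowPerm j h σ) (· * windowPerm j h σ⁻¹) (fun π hπ => ?_)
    (fun π hπ => ?_) (fun π _ => ?_) (fun π _ => ?_) (fun π hπ => ?_)
  · rw [mem_filter] at hπ ⊢
    exact ⟨(hs π σ).2 hπ.1, by simpa using (occursAt_mul_windowPerm_iff h σ).2 hπ.2⟩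
  · rw [mem_filter] at hπ ⊢
    exact ⟨(hs π σ⁻¹).2 hπ.1, hσ ▸ (occursAt_mul_windowPerm_iff h σ⁻¹).2 hπ.2⟩
  · simp only [mul_assoc, ← map_mul, mul_inv_cancel, map_one, mul_one]
  · simp only [mul_assoc, ← map_mul, inv_mul_cancel, map_one, mul_one]
  · rw [inversions_mul_windowPerm h σ (mem_filter.1 hπ).2, pow_add, mul_comm]

lemma sum_eq_sum_pow_inversions_mul (hs : ∀ π τ, π * windowPerm j h τ ∈ s ↔ π ∈ s) :
    ∑ π ∈ s, q ^ inversions π = (∑ τ : Perm (Fin m), q ^ inversions τ)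
      * ∑ π ∈ s with occursAt (1 : Perm (Fin m)) π j, q ^ inversions π := by
  rw [sum_eq_sum_sum_filter_occursAt h, sum_mul]
  exact sum_congr rfl fun σ _ => sum_filter_occursAt_eq_pow_mul q h hs σ

end Sums

section GeneratingFunction

variable {N : ℕ}

lemma occursAt_iff_succ {σ : Perm (Fin N)} {π : Perm (Fin (N + 1))} :
    occursAt σ π 1 ↔ ∀ a b, σ a < σ b ↔ π a.succ < π b.succ := by
  have hsucc (a : Fin N) : windowEmb 1 (by omega) a = a.succ := Fin.ext (by simp [add_comm])
  rw [occursAt_iff (by omega)]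
  simp only [hsucc]

lemma occursAt_one_cycleRange_symm (v : Fin (N + 1)) :
    occursAt (1 : Perm (Fin N)) v.cycleRange.symm 1 :=
  occursAt_iff_succ.2 fun a b => by simp [(Fin.strictMono_succAbove v).lt_iff_lt]

lemma eq_cycleRange_symm_of_occursAt_one {π : Perm (Fin (N + 1))}
    (hπ : occursAt (1 : Perm (Fin N)) π 1) : π = (π 0).cycleRange.symm := by
  have hmono : StrictMono (π ∘ Fin.succ) := fun a b hab => (occursAt_iff_succ.1 hπ a b).1 hab
  have hrange : Set.range (π ∘ Fin.succ) = Set.range (π 0).succAbove := by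
    rw [Set.range_comp, Fin.range_succ, Fin.range_succAbove, Set.image_compl_eq π.bijective,
      Set.image_singleton]
  have htail := (hmono.range_inj (Fin.strictMono_succAbove (π 0))).1 hrange
  refine Equiv.ext fun k => Fin.cases (by simp) (fun a => ?_) k
  simpa using congrFun htail a

lemma inversions_cycleRange_symm (v : Fin (N + 1)) : inversions v.cycleRange.symm = v := by
  have hcard : #{b : Fin N | (b : ℕ) < v} = v := by
    rw [Fin.card_filter_val_lt]
    omega
  rw [inversions_eq_card_inversionSet, ← hcard]
  symm
  refine card_nbij (fun b => (0, b.succ)) (fun b hb => ?_)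
    (fun a _ b _ hab => Fin.succ_injective _ (congrArg Prod.snd hab)) (fun p hp => ?_)
  · simp only [coe_filter, mem_univ, true_and, Set.mem_ofPred_eq, mem_coe] at hb ⊢
    simp only [mem_inversionSet, Fin.succ_pos, true_and, Fin.cycleRange_symm_succ,
      Fin.cycleRange_symm_zero, Fin.succAbove_lt_iff_castSucc_lt]
    exact hb
  · obtain ⟨a, b⟩ := p
    simp only [mem_coe, mem_inversionSet, Set.mem_image, coe_filter, mem_univ, true_and,
      Set.mem_ofPred_eq] at hp ⊢
    obtain ⟨hlt, hinv⟩ := hp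
    induction b using Fin.cases with
    | zero => exact absurd hlt (Fin.not_lt_zero a)
    | succ b =>
      induction a using Fin.cases with
      | zero =>
        refine ⟨b, ?_, rfl⟩
        simp only [Fin.cycleRange_symm_succ, Fin.cycleRange_symm_zero,
          Fin.succAbove_lt_iff_castSucc_lt] at hinv
        exact hinv
      | succ a =>
        simp only [Fin.succ_lt_succ_iff, Fin.cycleRange_symm_succ] at hlt hinv
        exact absurd ((Fin.strictMono_succAbove v) hlt) hinv.asymm

lemma sum_filter_occursAt_one_one (q : ℝ) :
    ∑ π : Perm (Fin (N + 1)) with occursAt (1 : Perm (Fin N)) π 1, q ^ inversions π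
      = qint q (N + 1) := by
  rw [qint, ← Fin.sum_univ_eq_sum_range]
  refine sum_nbij' (fun π => π 0) (fun v => v.cycleRange.symm) (fun _ _ => mem_univ _)
    (fun v _ => mem_filter.2 ⟨mem_univ _, occursAt_one_cycleRange_symm v⟩)
    (fun π hπ => (eq_cycleRange_symm_of_occursAt_one (mem_filter.1 hπ).2).symm)
    (fun v _ => Fin.cycleRange_symm_zero v) (fun π hπ => ?_)
  rw [eq_cycleRange_symm_of_occursAt_one (mem_filter.1 hπ).2, inversions_cycleRange_symm,
    Fin.cycleRange_symm_zero]

theorem sum_pow_inversions (q : ℝ) (N : ℕ) :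
    ∑ π : Perm (Fin N), q ^ inversions π = qfact q N := by
  induction N with
  | zero => simp [qfact, Subsingleton.elim _ (1 : Perm (Fin 0))]
  | succ N ih =>
    rw [sum_eq_sum_pow_inversions_mul q (by omega : 1 + N ≤ N + 1) (by simp), ih,
      sum_filter_occursAt_one_one, qfact, qfact, prod_range_succ]

end GeneratingFunction

section Dissociation

variable {m n : ℕ} (q : ℝ) {i j : ℕ}

lemma sum_occursAt_and_occursAt (hi : i + m ≤ n) (hj : j + m ≤ n) (hd : i + m ≤ j ∨ j + m ≤ i)
    (σ τ : Perm (Fin m)) :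
    ∑ π : Perm (Fin n) with occursAt σ π i ∧ occursAt τ π j, q ^ inversions π
      = q ^ inversions σ * q ^ inversions τ *
        ∑ π : Perm (Fin n) with occursAt (1 : Perm (Fin m)) π i ∧ occursAt (1 : Perm (Fin m)) π j,
          q ^ inversions π := by
  rw [← filter_filter, sum_filter_occursAt_eq_pow_mul q hj
      (fun π ρ => by simp [occursAt_mul_windowPerm_of_disjoint hj ρ hd]),
    filter_comm, sum_filter_occursAt_eq_pow_mul q hi
      (fun π ρ => by simp [occursAt_mul_windowPerm_of_disjoint hi ρ hd.symm]),
    filter_comm, filter_filter]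
  ring

lemma sum_occursAt_one_eq_mul (hj : j + m ≤ n) (hd : i + m ≤ j ∨ j + m ≤ i) :
    ∑ π : Perm (Fin n) with occursAt (1 : Perm (Fin m)) π i, q ^ inversions π
      = (∑ τ : Perm (Fin m), q ^ inversions τ) *
        ∑ π : Perm (Fin n) with occursAt (1 : Perm (Fin m)) π i ∧ occursAt (1 : Perm (Fin m)) π j,
          q ^ inversions π := by
  rw [sum_eq_sum_pow_inversions_mul q hj
      (fun π ρ => by simp [occursAt_mul_windowPerm_of_disjoint hj ρ hd]), filter_filter]

end Dissociation

theorem mallows_windows_independent_general (m n : ℕ) (σ : Equiv.Perm (Fin m))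
    (q : ℝ) (i j : ℕ) (hi : i + m ≤ n) (hj : j + m ≤ n)
    (hij : i + m ≤ j ∨ j + m ≤ i) :
    (∑ π ∈ Finset.univ.filter
        (fun π : Equiv.Perm (Fin n) => occursAt σ π i ∧ occursAt σ π j),
      q ^ inversions π) / qfact q n
    = ((∑ π ∈ Finset.univ.filter (fun π : Equiv.Perm (Fin n) => occursAt σ π i),
          q ^ inversions π) / qfact q n) *
      ((∑ π ∈ Finset.univ.filter (fun π : Equiv.Perm (Fin n) => occursAt σ π j),
          q ^ inversions π) / qfact q n) := by
  have hI := sum_occursAt_one_eq_mul q hj hij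
  have hJ := sum_occursAt_one_eq_mul q hi hij.symm
  simp only [and_comm (a := occursAt 1 _ j)] at hJ
  rw [sum_occursAt_and_occursAt q hi hj hij, sum_filter_occursAt_eq_pow_mul q hi (by simp) σ,
    sum_filter_occursAt_eq_pow_mul q hj (by simp) σ, ← sum_pow_inversions q n,
    sum_eq_sum_pow_inversions_mul q hi (s := univ) (by simp), hI, hJ]
  generalize ∑ τ : Perm (Fin m), q ^ inversions τ = Z
  generalize ∑ π : Perm (Fin n) with occursAt (1 : Perm (Fin m)) π i ∧
    occursAt (1 : Perm (Fin m)) π j, q ^ inversions π = K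
  -- if `Z * K = 0`, i.e. `[n]_q! = 0`, both sides are `0` by the convention `x / 0 = 0`
  rcases eq_or_ne (Z * K) 0 with hZK | hZK
  · simp [hZK]
  · field_simp

/-- weak dissociation: under Mallows(q) on `S_n`, the indicator events that
`σ` occurs at positions `i` and `j` are independent whenever `|i - j| ≥ m`. -/
theorem mallows_windows_independent (m n : ℕ) (hm : 1 ≤ m) (σ : Equiv.Perm (Fin m))
    (q : ℝ) (hq : 0 < q) (i j : ℕ) (hi : i + m ≤ n) (hj : j + m ≤ n)
    (hij : i + m ≤ j ∨ j + m ≤ i) :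
    (∑ π ∈ Finset.univ.filter
        (fun π : Equiv.Perm (Fin n) => occursAt σ π i ∧ occursAt σ π j),
      q ^ inversions π) / qfact q n
    = ((∑ π ∈ Finset.univ.filter (fun π : Equiv.Perm (Fin n) => occursAt σ π i),
          q ^ inversions π) / qfact q n) *
      ((∑ π ∈ Finset.univ.filter (fun π : Equiv.Perm (Fin n) => occursAt σ π j),
          q ^ inversions π) / qfact q n) :=
  mallows_windows_independent_general m n σ q i j hi hj hij
end

section
/- Fix m ≥ 3, σ ∈ S_m, and q > 0. For n ≥ m, the probability that a Mallows(q) random permutation of length n avoids σ satisfies P_n(σ,q) ≤ (1 − q^{inv(σ)}/[m]_q!)^{⌊n/m⌋}. Consequently, the growth rate satisfies ρ(σ,q) ≤ (1 − q^{inv(σ)}/[m]_q!)^{1/m}. -/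
open scoped Classical

/-! Cutting a permutation of length `m + r` into the set `S` of its first `m` values and the
patterns `τ`, `ρ` of its first `m` and last `r` entries is a bijection, under which
`inv = inv τ + inv ρ + #{(x, y) ∈ S × Sᶜ | y < x}`. So Mallows weights factor over events that
depend on `τ` and on `ρ` separately. With the trivial events this gives `∑ q^inv = [n]_q!`; with
"`σ` does not occur at position `jm`" for `j < k` it shows that these events are independent, each
of probability `1 - q^{inv σ}/[m]_q!`. Avoiding `σ` implies the `⌊n/m⌋` such events, and the
bound on the growth rate follows by taking `n`-th roots, since `⌊n/m⌋/n → 1/m`. -/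

namespace ConsecutivePattern

open Finset Equiv

variable {m r : ℕ}

lemma sum_orderEmbOfFin {α M : Type*} [LinearOrder α] [AddCommMonoid M] (s : Finset α) {k : ℕ}
    (h : #s = k) (f : α → M) : ∑ i, f (s.orderEmbOfFin h i) = ∑ x ∈ s, f x := by
  conv_rhs => rw [← s.map_orderEmbOfFin_univ h, sum_map]
  rfl

lemma inversions_eq_sum {n : ℕ} (π : Perm (Fin n)) :
    inversions π = ∑ i, ∑ j, if i < j ∧ π j < π i then 1 else 0 := by
  rw [inversions, card_filter, ← Fintype.sum_prod_type']

lemma inversions_one {n : ℕ} : inversions (1 : Perm (Fin n)) = 0 := by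
  rw [inversions, card_eq_zero, filter_eq_empty_iff]
  exact fun p _ h => lt_asymm h.1 h.2

lemma perm_eq_of_lt_iff_lt {σ τ : Perm (Fin m)} (h : ∀ a b, σ a < σ b ↔ τ a < τ b) : τ = σ := by
  -- `σ⁻¹` followed by `τ` is an order automorphism of `Fin m`, hence the identity.
  let e : Fin m ≃o Fin m := ⟨σ.symm.trans τ, fun {x y} => by
    rw [← not_lt, ← not_lt, Equiv.trans_apply, Equiv.trans_apply, ← h, σ.apply_symm_apply,
      σ.apply_symm_apply]⟩
  refine Equiv.ext fun a => ?_
  simpa [e] using congrArg (fun f : Fin m ≃o Fin m => f (σ a)) (Subsingleton.elim e (.refl _))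

lemma qint_pos {q : ℝ} (hq : 0 ≤ q) {k : ℕ} (hk : 0 < k) : 0 < qint q k :=
  sum_pos' (fun i _ => pow_nonneg hq i) ⟨0, mem_range.2 hk, by simp⟩

lemma qfact_pos {q : ℝ} (hq : 0 ≤ q) (n : ℕ) : 0 < qfact q n :=
  prod_pos fun i _ => qint_pos hq i.succ_pos

def crossInversions {n : ℕ} (S : Finset (Fin n)) : ℕ := #{p ∈ S ×ˢ Sᶜ | p.2 < p.1}

lemma crossInversions_singleton {n : ℕ} (x : Fin n) : crossInversions {x} = x := by
  rw [crossInversions, singleton_product, filter_map, card_map]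
  convert Fin.card_Iio x using 2
  ext y
  simpa using ne_of_lt

lemma card_compl_of_card_eq {S : Finset (Fin (m + r))} (hS : #S = m) : #Sᶜ = r := by
  rw [card_compl, hS, Fintype.card_fin, Nat.add_sub_cancel_left]

/-- The permutation whose first `m` values form the set `S`, in the relative order `τ`, and whose
last `r` values form `Sᶜ`, in the relative order `ρ`. -/
noncomputable def shuffle (S : Finset (Fin (m + r))) (hS : #S = m) (τ : Perm (Fin m))
    (ρ : Perm (Fin r)) : Perm (Fin (m + r)) :=
  finSumFinEquiv.symm.trans <| (sumCongr τ ρ).trans <|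
    (sumCongr (S.orderIsoOfFin hS).toEquiv
      ((Sᶜ.orderIsoOfFin (card_compl_of_card_eq hS)).toEquiv.trans
        (subtypeEquivRight fun _ => mem_compl))).trans (sumCompl (· ∈ S))

section

variable (S : Finset (Fin (m + r))) (hS : #S = m) (τ : Perm (Fin m)) (ρ : Perm (Fin r))

lemma shuffle_castAdd (a : Fin m) :
    shuffle S hS τ ρ (Fin.castAdd r a) = S.orderEmbOfFin hS (τ a) := by
  simp [shuffle]

lemma shuffle_natAdd (b : Fin r) :
    shuffle S hS τ ρ (Fin.natAdd m b) = Sᶜ.orderEmbOfFin (card_compl_of_card_eq hS) (ρ b) := by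
  simp [shuffle]

lemma image_shuffle_castAdd :
    univ.image (fun a => shuffle S hS τ ρ (Fin.castAdd r a)) = S := by
  apply coe_injective
  simp [shuffle_castAdd, Set.range_comp']

lemma shuffle_injective :
    Function.Injective fun x : {S : Finset (Fin (m + r)) // #S = m} × Perm (Fin m) ×
      Perm (Fin r) => shuffle x.1.1 x.1.2 x.2.1 x.2.2 := by
  rintro ⟨⟨S, hS⟩, τ, ρ⟩ ⟨⟨S', hS'⟩, τ', ρ'⟩ h
  dsimp only at h
  obtain rfl : S = S' := by rw [← image_shuffle_castAdd S hS τ ρ, h, image_shuffle_castAdd]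
  have hτ : τ = τ' := Equiv.ext fun a => (S.orderEmbOfFin hS).injective <| by
    rw [← shuffle_castAdd, h, shuffle_castAdd]
  have hρ : ρ = ρ' := Equiv.ext fun b => (Sᶜ.orderEmbOfFin _).injective <| by
    rw [← shuffle_natAdd S hS τ ρ, h, shuffle_natAdd]
  rw [hτ, hρ]

lemma card_shuffle_domain :
    Fintype.card ({S : Finset (Fin (m + r)) // #S = m} × Perm (Fin m) × Perm (Fin r)) =
      Fintype.card (Perm (Fin (m + r))) := by
  simp only [Fintype.card_prod, Fintype.card_finset_len, Fintype.card_perm, Fintype.card_fin]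
  rw [← mul_assoc, ← Nat.add_choose_mul_factorial_mul_factorial, Nat.choose_symm_add]

variable (m r) in
/-- The permutation whose first `m` values form the set `S`, in the relative order `τ`, and whose
last `r` values form `Sᶜ`, in the relative order `ρ`. -/
noncomputable def shuffleEquiv :
    {S : Finset (Fin (m + r)) // #S = m} × Perm (Fin m) × Perm (Fin r) ≃ Perm (Fin (m + r)) :=
  Equiv.ofBijective _ <|
    (Fintype.bijective_iff_injective_and_card _).2 ⟨shuffle_injective, card_shuffle_domain⟩

lemma sum_perm_eq_sum_shuffle {M : Type*} [AddCommMonoid M] (f : Perm (Fin (m + r)) → M) :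
    ∑ π, f π = ∑ S : {S : Finset (Fin (m + r)) // #S = m}, ∑ τ, ∑ ρ, f (shuffle S.1 S.2 τ ρ) := by
  rw [← (shuffleEquiv m r).sum_comp, Fintype.sum_prod_type]
  simp only [Fintype.sum_prod_type]
  rfl

lemma inversions_shuffle :
    inversions (shuffle S hS τ ρ) = inversions τ + inversions ρ + crossInversions S := by
  have hcross : crossInversions S = ∑ a, ∑ b, if Sᶜ.orderEmbOfFin (card_compl_of_card_eq hS) (ρ b) <
      S.orderEmbOfFin hS (τ a) then 1 else 0 := by
    rw [crossInversions, card_filter, sum_product, ← sum_orderEmbOfFin S hS]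
    simp only [← sum_orderEmbOfFin Sᶜ (card_compl_of_card_eq hS)]
    exact (Fintype.sum_equiv τ _ _ fun a => Fintype.sum_equiv ρ _ _ fun b => by rfl).symm
  have hlr (a : Fin m) (b : Fin r) : Fin.castAdd r a < Fin.natAdd m b := by
    rw [Fin.lt_def, Fin.val_castAdd, Fin.val_natAdd]; omega
  simp only [inversions_eq_sum, Fin.sum_univ_add, shuffle_castAdd, shuffle_natAdd,
    OrderEmbedding.lt_iff_lt, (Fin.strictMono_castAdd r).lt_iff_lt, Fin.natAdd_lt_natAdd_iff, hlr,
    (hlr _ _).asymm, true_and, false_and, if_false, sum_const_zero, add_zero, sum_add_distrib,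
    hcross]
  ring

end

noncomputable def invWeight (q : ℝ) (n : ℕ) (P : Perm (Fin n) → Prop) : ℝ :=
  ∑ π ∈ univ.filter P, q ^ inversions π

noncomputable def crossWeight (q : ℝ) (m r : ℕ) : ℝ :=
  ∑ S : {S : Finset (Fin (m + r)) // #S = m}, q ^ crossInversions S.1

lemma invWeight_shuffle (q : ℝ) {P : Perm (Fin (m + r)) → Prop} {G : Perm (Fin m) → Prop}
    {H : Perm (Fin r) → Prop} (hP : ∀ S hS τ ρ, P (shuffle S hS τ ρ) ↔ G τ ∧ H ρ) :
    invWeight q (m + r) P = crossWeight q m r * invWeight q m G * invWeight q r H := by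
  rw [invWeight, sum_filter, sum_perm_eq_sum_shuffle (M := ℝ), crossWeight, sum_mul, sum_mul]
  refine sum_congr rfl fun S _ => ?_
  rw [invWeight, invWeight, sum_filter, sum_filter, mul_assoc, sum_mul_sum, mul_sum]
  refine sum_congr rfl fun τ _ => ?_
  rw [mul_sum]
  refine sum_congr rfl fun ρ _ => ?_
  rw [hP, inversions_shuffle, ite_zero_mul_ite_zero, mul_ite, mul_zero]
  split_ifs <;> ring

lemma crossWeight_one (q : ℝ) (n : ℕ) : crossWeight q 1 n = qint q (1 + n) := by
  have hsingleton : Function.Bijective fun x : Fin (1 + n) =>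
      (⟨{x}, card_singleton x⟩ : {S : Finset (Fin (1 + n)) // #S = 1}) :=
    ⟨fun x y h => singleton_injective (congrArg Subtype.val h), fun ⟨S, hS⟩ =>
      let ⟨x, hx⟩ := card_eq_one.1 hS; ⟨x, Subtype.ext hx.symm⟩⟩
  rw [crossWeight, qint, ← Fin.sum_univ_eq_sum_range,
    ← Fintype.sum_bijective _ hsingleton _ _ fun x => rfl]
  simp only [crossInversions_singleton]

lemma invWeight_true_of_le_one (q : ℝ) {n : ℕ} (hn : n ≤ 1) :
    invWeight q n (fun _ => True) = 1 := by
  have : Subsingleton (Fin n) := Fin.subsingleton_iff_le_one.2 hn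
  rw [invWeight, filter_true, Fintype.sum_subsingleton _ 1, inversions_one, pow_zero]

lemma invWeight_true (q : ℝ) (n : ℕ) : invWeight q n (fun _ => True) = qfact q n := by
  induction n with
  | zero => rw [invWeight_true_of_le_one q zero_le_one, qfact, prod_range_zero]
  | succ n ih =>
    rw [qfact, prod_range_succ, ← qfact, ← ih, Nat.add_comm n 1, mul_comm,
      invWeight_shuffle q (P := fun _ => True) (G := fun _ => True) (H := fun _ => True)
        fun _ _ _ _ => and_self_iff.symm,
      crossWeight_one, invWeight_true_of_le_one q le_rfl, mul_one]

section

variable (σ : Perm (Fin m)) (S : Finset (Fin (m + r))) (hS : #S = m) (τ : Perm (Fin m))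
  (ρ : Perm (Fin r))

lemma occursAt_shuffle_zero : occursAt σ (shuffle S hS τ ρ) 0 ↔ τ = σ := by
  have hidx (a : Fin m) (ha : (a : ℕ) < m + r) : (⟨a, ha⟩ : Fin (m + r)) = Fin.castAdd r a := rfl
  simp only [occursAt, hidx, shuffle_castAdd, OrderEmbedding.lt_iff_lt, zero_add,
    Nat.le_add_right, exists_true_left]
  exact ⟨perm_eq_of_lt_iff_lt, fun h a b => h ▸ Iff.rfl⟩

lemma occursAt_shuffle_add (t : ℕ) :
    occursAt σ (shuffle S hS τ ρ) (m + t) ↔ occursAt σ ρ t := by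
  have hidx (a : Fin m) (ha : m + (t + a) < m + r) :
      (⟨m + (t + a), ha⟩ : Fin (m + r)) = Fin.natAdd m ⟨t + a, by omega⟩ := rfl
  simp only [occursAt, hidx, shuffle_natAdd, OrderEmbedding.lt_iff_lt, Nat.add_assoc,
    Nat.add_le_add_iff_left]

def avoidsFirstBlocks (σ : Perm (Fin m)) (k : ℕ) {n : ℕ} (π : Perm (Fin n)) : Prop :=
  ∀ j < k, ¬ occursAt σ π (j * m)

lemma avoidsFirstBlocks_succ_shuffle (k : ℕ) :
    avoidsFirstBlocks σ (k + 1) (shuffle S hS τ ρ) ↔ τ ≠ σ ∧ avoidsFirstBlocks σ k ρ := by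
  have hmul (j : ℕ) : (j + 1) * m = m + j * m := by ring
  simp only [avoidsFirstBlocks, Nat.forall_lt_succ_left, zero_mul, occursAt_shuffle_zero, hmul,
    occursAt_shuffle_add, ne_eq]

end

lemma qfact_add (q : ℝ) (m r : ℕ) :
    qfact q (m + r) = crossWeight q m r * qfact q m * qfact q r := by
  simp only [← invWeight_true]
  exact invWeight_shuffle q fun _ _ _ _ => and_self_iff.symm

lemma invWeight_ne (q : ℝ) (σ : Perm (Fin m)) :
    invWeight q m (· ≠ σ) = qfact q m - q ^ inversions σ := by
  rw [← invWeight_true, invWeight, invWeight, filter_true, ← sum_erase_eq_sub (mem_univ σ)]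
  simp [filter_ne']

lemma invWeight_avoidsFirstBlocks {q : ℝ} (hq : 0 ≤ q) (σ : Perm (Fin m)) (k : ℕ) :
    ∀ n, k * m ≤ n →
      invWeight q n (avoidsFirstBlocks σ k) =
        (1 - q ^ inversions σ / qfact q m) ^ k * qfact q n := by
  induction k with
  | zero =>
    intro n _
    rw [pow_zero, one_mul, ← invWeight_true q n]
    congr 1
    ext π
    simp [avoidsFirstBlocks]
  | succ k ih =>
    intro n hn
    obtain ⟨s, rfl⟩ : ∃ s, n = m + s := ⟨n - m, by rw [Nat.succ_mul] at hn; omega⟩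
    have hqm : qfact q m - q ^ inversions σ = (1 - q ^ inversions σ / qfact q m) * qfact q m := by
      field_simp [(qfact_pos hq m).ne']
    rw [invWeight_shuffle q (avoidsFirstBlocks_succ_shuffle σ · · · · k), invWeight_ne,
      ih s (by rw [Nat.succ_mul] at hn; omega), qfact_add, hqm]
    ring

lemma invWeight_mono {q : ℝ} (hq : 0 ≤ q) {n : ℕ} {P Q : Perm (Fin n) → Prop}
    (h : ∀ π, P π → Q π) : invWeight q n P ≤ invWeight q n Q :=
  sum_le_sum_of_subset_of_nonneg (monotone_filter_right _ fun π _ => h π)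
    fun _ _ _ => pow_nonneg hq _

lemma Pn_nonneg {q : ℝ} (hq : 0 ≤ q) (σ : Perm (Fin m)) (n : ℕ) : 0 ≤ Pn m σ q n :=
  div_nonneg (sum_nonneg fun _ _ => pow_nonneg hq _) (qfact_pos hq n).le

lemma Pn_le {q : ℝ} (hq : 0 ≤ q) (σ : Perm (Fin m)) (n : ℕ) :
    Pn m σ q n ≤ (1 - q ^ inversions σ / qfact q m) ^ (n / m) := by
  change invWeight q n (avoids σ) / qfact q n ≤ _
  rw [div_le_iff₀ (qfact_pos hq n),
    ← invWeight_avoidsFirstBlocks hq σ (n / m) n (Nat.div_mul_le_self n m)]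
  exact invWeight_mono hq fun π h j _ => h (j * m)

lemma one_sub_div_qfact_nonneg {q : ℝ} (hq : 0 ≤ q) (σ : Perm (Fin m)) :
    0 ≤ 1 - q ^ inversions σ / qfact q m := by
  rw [sub_nonneg, div_le_one (qfact_pos hq m), ← invWeight_true, invWeight, filter_true]
  exact single_le_sum (fun π _ => pow_nonneg hq (inversions π)) (mem_univ σ)

open Filter Topology in
lemma tendsto_nat_div_div_self (hm : 0 < m) :
    Tendsto (fun n : ℕ => ((n / m : ℕ) : ℝ) / n) atTop (𝓝 (1 / m)) := by
  have hfloor : Tendsto (fun n : ℕ => (⌊(n : ℝ) / m⌋₊ : ℝ) / ((n : ℝ) / m) * (1 / m)) atTop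
      (𝓝 (1 * (1 / m))) :=
    (tendsto_nat_floor_div_atTop.comp
      (tendsto_natCast_atTop_atTop.atTop_div_const (Nat.cast_pos.2 hm))).mul_const _
  rw [one_mul] at hfloor
  refine hfloor.congr fun n => ?_
  rw [Nat.floor_div_eq_div]
  field_simp

lemma Pn_rpow_le {q : ℝ} (hq : 0 ≤ q) (σ : Perm (Fin m)) (n : ℕ) :
    Pn m σ q n ^ ((1 : ℝ) / n) ≤
      (1 - q ^ inversions σ / qfact q m) ^ (((n / m : ℕ) : ℝ) / n) := by
  rw [div_eq_mul_one_div (((n / m : ℕ) : ℝ)), Real.rpow_mul (one_sub_div_qfact_nonneg hq σ),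
    Real.rpow_natCast]
  exact Real.rpow_le_rpow (Pn_nonneg hq σ n) (Pn_le hq σ n) (by positivity)

end ConsecutivePattern

/-- for `m ≥ 3`, `σ ∈ S_m`, `q > 0` and `n ≥ m`,
`P_n(σ,q) ≤ (1 − q^{inv σ}/[m]_q!)^{⌊n/m⌋}`; consequently the growth rate (when it exists)
satisfies `ρ(σ,q) ≤ (1 − q^{inv σ}/[m]_q!)^{1/m}`. -/
theorem Pn_upper_bound (m : ℕ) (hm : 3 ≤ m) (σ : Equiv.Perm (Fin m)) (q : ℝ)
    (hq : 0 < q) :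
    (∀ n : ℕ, m ≤ n →
      Pn m σ q n ≤ (1 - q ^ inversions σ / qfact q m) ^ (n / m)) ∧
    (∀ ρ : ℝ,
      Filter.Tendsto (fun n : ℕ => (Pn m σ q n) ^ ((1 : ℝ) / n))
        Filter.atTop (nhds ρ) →
      ρ ≤ (1 - q ^ inversions σ / qfact q m) ^ ((1 : ℝ) / m)) := by
  refine ⟨fun n _ => ConsecutivePattern.Pn_le hq.le σ n, fun ρ hρ => ?_⟩
  have hexponent := ConsecutivePattern.tendsto_nat_div_div_self (m := m) (by omega)
  exact le_of_tendsto_of_tendsto' hρ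
    ((Real.continuousAt_const_rpow' (by positivity)).tendsto.comp hexponent)
    (ConsecutivePattern.Pn_rpow_le hq.le σ)
end
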